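/- arXiv:2106.11399 — 4 statements merged into one kernel-verified Lean document; each statement's English description precedes it below -/
import Mathlib

section
/- Energy conservation for the 1D toy model: let T > 0, let f : [0,T]×ℝ×ℝ → ℝ be continuously differentiable with compact support and satisfy pointwise ∂ₜf(t,x,v) + v̂ ∂ₓf(t,x,v) − ∂ₜA(t,x) ∂ᵥf(t,x,v) = 0, and let A : [0,T]×ℝ → ℝ be twice continuously differentiable with ∂ₜₜA − ∂ₓₓA = j_f pointwise and such that for each t ∈ [0,T] the functions x ↦ ∂ₜA(t,x) and x ↦ ∂ₓA(t,x) have compact support. Then the energy E(t) = ∫_ℝ ∫_ℝ √(1+v²) f(t,x,v) dv dx + (1/2) ∫_ℝ (|∂ₜA(t,x)|² + |∂ₓA(t,x)|²) dx is constant on [0,T]. -/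
open MeasureTheory Set

/-- The relativistic velocity `v̂ = v / √(1+v²)`. -/
noncomputable def vhat (v : ℝ) : ℝ := v / Real.sqrt (1 + v ^ 2)

/-- The current density `j_f(t,x) = ∫ v̂ f(t,x,v) dv`. -/
noncomputable def jcur (f : ℝ → ℝ → ℝ → ℝ) (t x : ℝ) : ℝ := ∫ v : ℝ, vhat v * f t x v

/-- The partial derivative in the first (time) variable. -/
noncomputable def pt (F : ℝ → ℝ → ℝ) (t x : ℝ) : ℝ := deriv (fun s => F s x) t

/-- The partial derivative in the second (space) variable. -/
noncomputable def px (F : ℝ → ℝ → ℝ) (t x : ℝ) : ℝ := deriv (fun y => F t y) x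

open Filter Topology


noncomputable def PhiA (A : ℝ → ℝ → ℝ) : ℝ×ℝ → ℝ := fun p => A p.1 p.2
noncomputable def PsiA (A : ℝ → ℝ → ℝ) : ℝ×ℝ → (ℝ×ℝ) →L[ℝ] ℝ := fderiv ℝ (PhiA A)
noncomputable def XiA (A : ℝ → ℝ → ℝ) : ℝ×ℝ → (ℝ×ℝ) →L[ℝ] (ℝ×ℝ) →L[ℝ] ℝ := fderiv ℝ (PsiA A)
noncomputable def Phif (f : ℝ → ℝ → ℝ → ℝ) : ℝ×ℝ×ℝ → ℝ := fun p => f p.1 p.2.1 p.2.2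
noncomputable def Psif (f : ℝ → ℝ → ℝ → ℝ) : ℝ×ℝ×ℝ → (ℝ×ℝ×ℝ) →L[ℝ] ℝ := fderiv ℝ (Phif f)

lemma slice1 {F : ℝ×ℝ → ℝ} {L : ℝ×ℝ →L[ℝ] ℝ} {t x : ℝ} (h : HasFDerivAt F L (t,x)) :
    HasDerivAt (fun s => F (s,x)) (L (1,0)) t :=
  h.comp_hasDerivAt t ((hasDerivAt_id t).prodMk (hasDerivAt_const t x))

lemma slice2 {F : ℝ×ℝ → ℝ} {L : ℝ×ℝ →L[ℝ] ℝ} {t x : ℝ} (h : HasFDerivAt F L (t,x)) :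
    HasDerivAt (fun y => F (t,y)) (L (0,1)) x :=
  h.comp_hasDerivAt x ((hasDerivAt_const x t).prodMk (hasDerivAt_id x))

section Apack
variable {A : ℝ → ℝ → ℝ} (hA : ContDiff ℝ 2 (PhiA A))
include hA

lemma PsiA_contDiff : ContDiff ℝ 1 (PsiA A) := hA.fderiv_right (by norm_num)

lemma XiA_cont : Continuous (XiA A) := (PsiA_contDiff hA).continuous_fderiv one_ne_zero

lemma XiA_symm : ∀ (p : ℝ×ℝ) a b, XiA A p a b = XiA A p b a := fun p a b =>
  second_derivative_symmetric (f := PhiA A) (f' := PsiA A) (f'' := XiA A p)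
    (fun y => (hA.differentiable two_ne_zero y).hasFDerivAt)
    (((PsiA_contDiff hA).differentiable one_ne_zero p).hasFDerivAt) a b

lemma hasDerivAt_A1 (t x : ℝ) : HasDerivAt (fun s => A s x) (PsiA A (t,x) (1,0)) t :=
  slice1 ((hA.differentiable two_ne_zero (t,x)).hasFDerivAt)

lemma hasDerivAt_A2 (t x : ℝ) : HasDerivAt (fun y => A t y) (PsiA A (t,x) (0,1)) x :=
  slice2 ((hA.differentiable two_ne_zero (t,x)).hasFDerivAt)

lemma pt_eqPsi (t x : ℝ) : pt A t x = PsiA A (t,x) (1,0) := (hasDerivAt_A1 hA t x).deriv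

lemma px_eqPsi (t x : ℝ) : px A t x = PsiA A (t,x) (0,1) := (hasDerivAt_A2 hA t x).deriv

lemma hasFDerivAt_PsiA_apply (a : ℝ×ℝ) (p : ℝ×ℝ) :
    HasFDerivAt (fun q => PsiA A q a)
      ((ContinuousLinearMap.apply ℝ ℝ a).comp (XiA A p)) p :=
  (ContinuousLinearMap.apply ℝ ℝ a).hasFDerivAt.comp p
    (((PsiA_contDiff hA).differentiable one_ne_zero p).hasFDerivAt)

lemma hasDerivAt_u_t (a : ℝ×ℝ) (t x : ℝ) :
    HasDerivAt (fun s => PsiA A (s,x) a) (XiA A (t,x) (1,0) a) t := by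
  simpa using slice1 (hasFDerivAt_PsiA_apply hA a (t,x))

lemma hasDerivAt_u_x (a : ℝ×ℝ) (t x : ℝ) :
    HasDerivAt (fun y => PsiA A (t,y) a) (XiA A (t,x) (0,1) a) x := by
  simpa using slice2 (hasFDerivAt_PsiA_apply hA a (t,x))

lemma ptpt_eqXi (t x : ℝ) : pt (pt A) t x = XiA A (t,x) (1,0) (1,0) := by
  have h1 : (fun s => pt A s x) = fun s => PsiA A (s,x) (1,0) :=
    funext fun s => pt_eqPsi hA s x
  rw [pt, h1]
  exact (hasDerivAt_u_t hA (1,0) t x).deriv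

lemma pxpx_eqXi (t x : ℝ) : px (px A) t x = XiA A (t,x) (0,1) (0,1) := by
  have h1 : (fun y => px A t y) = fun y => PsiA A (t,y) (0,1) :=
    funext fun y => px_eqPsi hA t y
  rw [px, h1]
  exact (hasDerivAt_u_x hA (0,1) t x).deriv

end Apack
section fpack

lemma slice3a {F : ℝ×ℝ×ℝ → ℝ} {L : ℝ×ℝ×ℝ →L[ℝ] ℝ} {t x v : ℝ} (h : HasFDerivAt F L (t,x,v)) :
    HasDerivAt (fun s => F (s,x,v)) (L (1,0,0)) t :=
  h.comp_hasDerivAt t ((hasDerivAt_id t).prodMk ((hasDerivAt_const t x).prodMk (hasDerivAt_const t v)))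

lemma slice3b {F : ℝ×ℝ×ℝ → ℝ} {L : ℝ×ℝ×ℝ →L[ℝ] ℝ} {t x v : ℝ} (h : HasFDerivAt F L (t,x,v)) :
    HasDerivAt (fun y => F (t,y,v)) (L (0,1,0)) x :=
  h.comp_hasDerivAt x ((hasDerivAt_const x t).prodMk ((hasDerivAt_id x).prodMk (hasDerivAt_const x v)))

lemma slice3c {F : ℝ×ℝ×ℝ → ℝ} {L : ℝ×ℝ×ℝ →L[ℝ] ℝ} {t x v : ℝ} (h : HasFDerivAt F L (t,x,v)) :
    HasDerivAt (fun w => F (t,x,w)) (L (0,0,1)) v :=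
  h.comp_hasDerivAt v ((hasDerivAt_const v t).prodMk ((hasDerivAt_const v x).prodMk (hasDerivAt_id v)))

variable {f : ℝ → ℝ → ℝ → ℝ} (hf : ContDiff ℝ 1 (Phif f))
include hf

lemma hasDerivAt_f1 (t x v : ℝ) : HasDerivAt (fun s => f s x v) (Psif f (t,x,v) (1,0,0)) t :=
  slice3a ((hf.differentiable one_ne_zero (t,x,v)).hasFDerivAt)

lemma hasDerivAt_f2 (t x v : ℝ) : HasDerivAt (fun y => f t y v) (Psif f (t,x,v) (0,1,0)) x :=
  slice3b ((hf.differentiable one_ne_zero (t,x,v)).hasFDerivAt)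

lemma hasDerivAt_f3 (t x v : ℝ) : HasDerivAt (fun w => f t x w) (Psif f (t,x,v) (0,0,1)) v :=
  slice3c ((hf.differentiable one_ne_zero (t,x,v)).hasFDerivAt)

lemma Psif_cont : Continuous (Psif f) := hf.continuous_fderiv one_ne_zero

end fpack

-- vhat and sqrt facts
lemma sqrt_one_add_sq_pos (v : ℝ) : 0 < Real.sqrt (1 + v ^ 2) :=
  Real.sqrt_pos.2 (by positivity)

lemma hasDerivAt_esqrt (v : ℝ) : HasDerivAt (fun w => Real.sqrt (1 + w ^ 2)) (vhat v) v := by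
  have h1 : HasDerivAt (fun w : ℝ => 1 + w ^ 2) (2 * v) v := by
    simpa using (hasDerivAt_pow 2 v).const_add 1
  have h2 := (Real.hasDerivAt_sqrt (by positivity : (1:ℝ) + v ^ 2 ≠ 0)).comp v h1
  refine h2.congr_deriv ?_
  rw [vhat]
  field_simp

lemma abs_vhat_le_one (v : ℝ) : |vhat v| ≤ 1 := by
  rw [vhat, abs_div, abs_of_pos (sqrt_one_add_sq_pos v), div_le_one (sqrt_one_add_sq_pos v)]
  rw [← Real.sqrt_sq_eq_abs]
  exact Real.sqrt_le_sqrt (by nlinarith)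

lemma continuous_esqrt : Continuous (fun v : ℝ => Real.sqrt (1 + v ^ 2)) :=
  Real.continuous_sqrt.comp (by continuity)

lemma continuous_vhat : Continuous vhat := by
  apply Continuous.div continuous_id continuous_esqrt
  exact fun v => (sqrt_one_add_sq_pos v).ne'

-- global bound helper
lemma exists_bound_global {α : Type*} [TopologicalSpace α] {g : α → ℝ} {S : Set α}
    (hS : IsCompact S) (hg : Continuous g) (h0 : ∀ p ∉ S, g p = 0) :
    ∃ C, 0 ≤ C ∧ ∀ p, |g p| ≤ C := by
  obtain ⟨C, hC⟩ := hS.exists_bound_of_continuousOn hg.continuousOn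
  refine ⟨max C 0, le_max_right _ _, fun p => ?_⟩
  by_cases hp : p ∈ S
  · exact le_trans (hC p hp) (le_max_left _ _)
  · simp [h0 p hp]

lemma integrable_indicator_const {α : Type*} [MeasureTheory.MeasureSpace α]
    [TopologicalSpace α] [OpensMeasurableSpace α] [T2Space α]
    [MeasureTheory.IsFiniteMeasureOnCompacts (volume : MeasureTheory.Measure α)]
    {K : Set α} (hK : IsCompact K) (C : ℝ) :
    MeasureTheory.Integrable (K.indicator fun _ => C) := by
  rw [MeasureTheory.integrable_indicator_iff hK.measurableSet]
  exact MeasureTheory.integrableOn_const hK.measure_lt_top.ne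

-- parametric derivative helper
lemma hasDerivAt_integral_param {α : Type*} [MeasureTheory.MeasureSpace α]
    [MeasureTheory.SigmaFinite (volume : MeasureTheory.Measure α)]
    {F F' : ℝ → α → ℝ} {t₀ ε : ℝ} (hε : 0 < ε)
    (hFm : ∀ s, MeasureTheory.AEStronglyMeasurable (F s) volume)
    (hF'm : MeasureTheory.AEStronglyMeasurable (F' t₀) volume)
    (hFint : MeasureTheory.Integrable (F t₀))
    {bound : α → ℝ} (hbound : MeasureTheory.Integrable bound)
    (hb : ∀ a, ∀ s ∈ Metric.ball t₀ ε, |F' s a| ≤ bound a)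
    (hderiv : ∀ a, ∀ s ∈ Metric.ball t₀ ε, HasDerivAt (fun r => F r a) (F' s a) s) :
    HasDerivAt (fun s => ∫ a, F s a) (∫ a, F' t₀ a) t₀ :=
  (hasDerivAt_integral_of_dominated_loc_of_deriv_le (Metric.ball_mem_nhds t₀ hε)
    (Filter.Eventually.of_forall hFm) hFint hF'm
    (Filter.Eventually.of_forall hb) hbound (Filter.Eventually.of_forall hderiv)).2

-- product integral helper
lemma prod_integral_eqs {G : ℝ×ℝ → ℝ} (hG : Continuous G) {K : Set (ℝ×ℝ)} (hK : IsCompact K)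
    (h0 : ∀ p ∉ K, G p = 0) :
    ((∫ p : ℝ×ℝ, G p) = ∫ x, ∫ v, G (x,v)) ∧ ((∫ p : ℝ×ℝ, G p) = ∫ v, ∫ x, G (x,v)) := by
  have hsupp : HasCompactSupport G := HasCompactSupport.intro hK h0
  have hint : Integrable G := hG.integrable_of_hasCompactSupport hsupp
  have hint' : Integrable (Function.uncurry (fun x v => G (x,v))) (volume.prod volume) := by
    rw [← MeasureTheory.Measure.volume_eq_prod ℝ ℝ]; exact hint
  constructor
  · rw [MeasureTheory.integral_integral hint', ← MeasureTheory.Measure.volume_eq_prod ℝ ℝ]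
  · rw [← MeasureTheory.integral_integral_swap hint', MeasureTheory.integral_integral hint',
      ← MeasureTheory.Measure.volume_eq_prod ℝ ℝ]
lemma integral_deriv_zero {g g' : ℝ → ℝ} (hd : ∀ x, HasDerivAt g (g' x) x)
    (hc : Continuous g') (hs : HasCompactSupport g) : ∫ x, g' x = 0 := by
  have hg1 : ContDiff ℝ 1 g := by
    rw [contDiff_one_iff_deriv]
    exact ⟨fun x => (hd x).differentiableAt, by
      rw [funext fun x => (hd x).deriv]; exact hc⟩
  have hderiv : deriv g = g' := funext fun x => (hd x).deriv
  have hint : Integrable g' := hc.integrable_of_hasCompactSupport (hderiv ▸ hs.deriv)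
  have h1 := hs.integral_Iic_deriv_eq hg1 0
  have h2 := hs.integral_Ioi_deriv_eq hg1 0
  rw [hderiv] at h1 h2
  rw [← intervalIntegral.integral_Iic_add_Ioi (b := 0) hint.integrableOn hint.integrableOn,
    h1, h2, add_neg_cancel]

lemma const_of_interior_deriv {H : ℝ → ℝ} {T : ℝ} (hT : 0 < T)
    (hc : ContinuousOn H (Icc 0 T)) (hd : ∀ t ∈ Ioo 0 T, HasDerivAt H 0 t) :
    ∀ t ∈ Icc (0:ℝ) T, H t = H 0 := by
  have key : ∀ a b : ℝ, 0 < a → a ≤ b → b ≤ T → H b = H a := by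
    intro a b ha hab hbT
    have := constant_of_has_deriv_right_zero (f := H) (a := a) (b := b)
      (hc.mono (Icc_subset_Icc (le_of_lt ha) hbT))
      (fun y hy => (hd y ⟨lt_of_lt_of_le ha hy.1, lt_of_lt_of_le hy.2 hbT⟩).hasDerivWithinAt)
    exact this b ⟨hab, le_rfl⟩
  intro t ht
  rcases eq_or_lt_of_le ht.1 with h0 | h0
  · rw [← h0]
  have ht2 : t/2 ∈ Ioo 0 t := ⟨by linarith, by linarith⟩
  have hA : Tendsto H (𝓝[Ico (t/2) t] t) (𝓝 (H t)) :=
    (hc t ht).tendsto.mono_left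
      (nhdsWithin_mono t (fun y hy => ⟨by linarith [hy.1, ht2.1], le_trans (le_of_lt hy.2) ht.2⟩))
  have hA' : Tendsto H (𝓝[Ico (t/2) t] t) (𝓝 (H (t/2))) := by
    apply Tendsto.congr' _ tendsto_const_nhds
    filter_upwards [self_mem_nhdsWithin] with y hy
    exact (key (t/2) y ht2.1 hy.1 (le_trans (le_of_lt hy.2) ht.2)).symm
  have hne : (𝓝[Ico (t/2) t] t).NeBot := right_nhdsWithin_Ico_neBot ht2.2
  have h1 : H t = H (t/2) := tendsto_nhds_unique hA hA'
  have hB : Tendsto H (𝓝[Ioc 0 (t/2)] 0) (𝓝 (H 0)) :=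
    (hc 0 (left_mem_Icc.2 (le_of_lt hT))).tendsto.mono_left
      (nhdsWithin_mono 0 (fun y hy => ⟨le_of_lt hy.1, le_trans hy.2 (by linarith [ht.2])⟩))
  have hB' : Tendsto H (𝓝[Ioc 0 (t/2)] 0) (𝓝 (H (t/2))) := by
    apply Tendsto.congr' _ tendsto_const_nhds
    filter_upwards [self_mem_nhdsWithin] with y hy
    exact key y (t/2) hy.1 hy.2 (by linarith [ht.2])
  have hne2 : (𝓝[Ioc 0 (t/2)] 0).NeBot := left_nhdsWithin_Ioc_neBot ht2.1
  have h2 : H 0 = H (t/2) := tendsto_nhds_unique hB hB'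
  rw [h1, h2]

set_option maxHeartbeats 1000000 in
/-- **Energy conservation for the 1D toy model.**
If `f` is `C¹` with compact support and satisfies the Vlasov equation
`∂ₜf + v̂ ∂ₓf - ∂ₜA ∂ₓf = 0` on `[0,T]`, and `A` is `C²` with `∂ₜₜA - ∂ₓₓA = j_f` on `[0,T]`
and `∂ₜA(t,·), ∂ₓA(t,·)` compactly supported for each `t ∈ [0,T]`, then the energy
`E(t) = ∬ √(1+v²) f(t,x,v) dv dx + (1/2) ∫ (|∂ₜA|² + |∂ₓA|²)(t,x) dx` is constant on `[0,T]`. -/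
theorem energy_conservation_toy (T : ℝ) (hT : 0 < T)
    (f : ℝ → ℝ → ℝ → ℝ) (A : ℝ → ℝ → ℝ)
    (hf : ContDiff ℝ 1 (fun p : ℝ × ℝ × ℝ => f p.1 p.2.1 p.2.2))
    (hfc : HasCompactSupport (fun p : ℝ × ℝ × ℝ => f p.1 p.2.1 p.2.2))
    (hvlasov : ∀ t ∈ Icc (0:ℝ) T, ∀ x v : ℝ,
      deriv (fun s => f s x v) t + vhat v * deriv (fun y => f t y v) x
        - pt A t x * deriv (fun w => f t x w) v = 0)
    (hA : ContDiff ℝ 2 (fun p : ℝ × ℝ => A p.1 p.2))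
    (hwave : ∀ t ∈ Icc (0:ℝ) T, ∀ x : ℝ, pt (pt A) t x - px (px A) t x = jcur f t x)
    (hAt : ∀ t ∈ Icc (0:ℝ) T, HasCompactSupport (fun x => pt A t x))
    (hAx : ∀ t ∈ Icc (0:ℝ) T, HasCompactSupport (fun x => px A t x)) :
    ∀ t ∈ Icc (0:ℝ) T,
      (∫ x : ℝ, ∫ v : ℝ, Real.sqrt (1 + v ^ 2) * f t x v)
          + (1/2) * ∫ x : ℝ, (|pt A t x| ^ 2 + |px A t x| ^ 2)
        = (∫ x : ℝ, ∫ v : ℝ, Real.sqrt (1 + v ^ 2) * f 0 x v)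
          + (1/2) * ∫ x : ℝ, (|pt A 0 x| ^ 2 + |px A 0 x| ^ 2) := by
  have hf' : ContDiff ℝ 1 (Phif f) := hf
  have hfc' : HasCompactSupport (Phif f) := hfc
  have hA' : ContDiff ℝ 2 (PhiA A) := hA
  have hfcont : Continuous (Phif f) := hf'.continuous
  have hPsifc : Continuous (Psif f) := Psif_cont hf'
  have hPsiAc : Continuous (PsiA A) := (PsiA_contDiff hA').continuous
  have hXiAc : Continuous (XiA A) := XiA_cont hA'
  -- support radius for f
  obtain ⟨r, hr⟩ := hfc'.isBounded.subset_closedBall 0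
  set Rf : ℝ := |r| + 1 with hRfdef
  have hRf1 : 1 ≤ Rf := by have := abs_nonneg r; simp only [hRfdef]; linarith
  have hRf0 : 0 < Rf := lt_of_lt_of_le one_pos hRf1
  have hnorm3 : ∀ t x v : ℝ, |x| ≤ ‖(t,x,v)‖ ∧ |v| ≤ ‖(t,x,v)‖ := by
    intro t x v
    constructor
    · rw [Prod.norm_def, Prod.norm_def]
      exact le_trans (le_max_left _ _) (le_max_right _ _)
    · rw [Prod.norm_def, Prod.norm_def]
      exact le_trans (le_max_right _ _) (le_max_right _ _)
  have hout : ∀ t x v : ℝ, (Rf ≤ |x| ∨ Rf ≤ |v|) → (t,x,v) ∉ tsupport (Phif f) := by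
    intro t x v h hmem
    have h2 := hr hmem
    rw [Metric.mem_closedBall, dist_zero_right] at h2
    rcases h with h | h
    · have := (hnorm3 t x v).1; have : Rf ≤ r := le_trans h (le_trans this h2)
      have : r ≤ |r| := le_abs_self r
      simp only [hRfdef] at *; linarith
    · have := (hnorm3 t x v).2; have : Rf ≤ r := le_trans h (le_trans this h2)
      have : r ≤ |r| := le_abs_self r
      simp only [hRfdef] at *; linarith
  have hfz : ∀ t x v : ℝ, (Rf ≤ |x| ∨ Rf ≤ |v|) → f t x v = 0 := fun t x v h =>
    image_eq_zero_of_notMem_tsupport (f := Phif f) (hout t x v h)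
  have hPsifz : ∀ t x v : ℝ, (Rf ≤ |x| ∨ Rf ≤ |v|) → Psif f (t,x,v) = 0 := by
    intro t x v h
    by_contra hne
    exact hout t x v h (support_fderiv_subset ℝ (Function.mem_support.2 hne))
  have hjz : ∀ t x : ℝ, Rf ≤ |x| → jcur f t x = 0 := by
    intro t x h
    rw [jcur]
    have : (fun v => vhat v * f t x v) = fun _ => (0:ℝ) :=
      funext fun v => by rw [hfz t x v (Or.inl h), mul_zero]
    rw [this, integral_zero]
  -- K2 and bound for E1
  set K2 : Set (ℝ×ℝ) := Metric.closedBall 0 Rf with hK2def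
  have hK2 : IsCompact K2 := isCompact_closedBall 0 Rf
  have hK2c : ∀ p : ℝ×ℝ, p ∉ K2 → (Rf ≤ |p.1| ∨ Rf ≤ |p.2|) := by
    intro p hp
    rw [hK2def, Metric.mem_closedBall, dist_zero_right, not_le, Prod.norm_def] at hp
    rcases max_cases ‖p.1‖ ‖p.2‖ with ⟨h1, _⟩ | ⟨h1, _⟩
    · left; rw [← Real.norm_eq_abs]; rw [h1] at hp; exact le_of_lt hp
    · right; rw [← Real.norm_eq_abs]; rw [h1] at hp; exact le_of_lt hp
  have hg1cont : Continuous (fun p : ℝ×ℝ×ℝ => Real.sqrt (1 + p.2.2 ^ 2) * Psif f p (1,0,0)) :=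
    (continuous_esqrt.comp (continuous_snd.comp continuous_snd)).mul
      ((ContinuousLinearMap.apply ℝ ℝ ((1:ℝ),(0:ℝ),(0:ℝ))).continuous.comp hPsifc)
  obtain ⟨C1, hC10, hC1⟩ := exists_bound_global hfc' hg1cont (fun p hp => by
    have : Psif f p = 0 := by
      by_contra hne
      exact hp (support_fderiv_subset ℝ (Function.mem_support.2 hne))
    rw [this]; simp)
  -- derivative of E1
  have hE1d : ∀ t₀ : ℝ, HasDerivAt (fun s => ∫ p : ℝ×ℝ, Real.sqrt (1 + p.2 ^ 2) * f s p.1 p.2)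
      (∫ p : ℝ×ℝ, Real.sqrt (1 + p.2 ^ 2) * Psif f (t₀,p.1,p.2) (1,0,0)) t₀ := by
    intro t₀
    have hcontF : ∀ s : ℝ, Continuous (fun p : ℝ×ℝ => Real.sqrt (1 + p.2 ^ 2) * f s p.1 p.2) :=
      fun s => (continuous_esqrt.comp continuous_snd).mul
        (hfcont.comp (continuous_const.prodMk continuous_id))
    have hcontF' : Continuous (fun p : ℝ×ℝ => Real.sqrt (1 + p.2 ^ 2) * Psif f (t₀,p.1,p.2) (1,0,0)) :=
      (continuous_esqrt.comp continuous_snd).mul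
        (((ContinuousLinearMap.apply ℝ ℝ ((1:ℝ),(0:ℝ),(0:ℝ))).continuous.comp hPsifc).comp
          (continuous_const.prodMk continuous_id))
    apply hasDerivAt_integral_param
      (F := fun s (p : ℝ×ℝ) => Real.sqrt (1 + p.2 ^ 2) * f s p.1 p.2)
      (F' := fun s (p : ℝ×ℝ) => Real.sqrt (1 + p.2 ^ 2) * Psif f (s,p.1,p.2) (1,0,0))
      (bound := K2.indicator fun _ => C1)
      one_pos (fun s => (hcontF s).aestronglyMeasurable) hcontF'.aestronglyMeasurable
    · apply (hcontF t₀).integrable_of_hasCompactSupport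
      apply HasCompactSupport.intro hK2
      intro p hp
      rw [hfz t₀ p.1 p.2 (hK2c p hp), mul_zero]
    · exact integrable_indicator_const hK2 C1
    · intro p s _
      by_cases hp : p ∈ K2
      · rw [indicator_of_mem hp]
        exact hC1 (s, p.1, p.2)
      · rw [indicator_of_notMem hp, hPsifz s p.1 p.2 (hK2c p hp)]
        simp
    · intro p s _
      exact (hasDerivAt_f1 hf' s p.1 p.2).const_mul _
  -- global bound for f
  obtain ⟨Cf, hCf0, hCf⟩ := exists_bound_global hfc' hfcont
    (fun p hp => image_eq_zero_of_notMem_tsupport hp)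
  -- continuity of jcur
  have hjcont : Continuous (fun q : ℝ×ℝ => jcur f q.1 q.2) := by
    have : Continuous (fun q : ℝ×ℝ => ∫ v : ℝ, vhat v * f q.1 q.2 v) := by
      apply continuous_of_dominated (bound := (Icc (-Rf) Rf).indicator fun _ => Cf)
      · intro q
        exact (continuous_vhat.mul (hfcont.comp
          ((continuous_const.prodMk (continuous_const.prodMk continuous_id)) :
            Continuous (fun v : ℝ => (q.1, q.2, v))))).aestronglyMeasurable
      · intro q
        apply Filter.Eventually.of_forall
        intro v
        by_cases hv : v ∈ Icc (-Rf) Rf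
        · rw [indicator_of_mem hv]
          rw [Real.norm_eq_abs, abs_mul]
          calc |vhat v| * |f q.1 q.2 v| ≤ 1 * |f q.1 q.2 v| :=
                mul_le_mul_of_nonneg_right (abs_vhat_le_one v) (abs_nonneg _)
            _ = |f q.1 q.2 v| := one_mul _
            _ ≤ Cf := hCf (q.1, q.2, v)
        · rw [indicator_of_notMem hv]
          have hv' : Rf ≤ |v| := by
            rw [mem_Icc, not_and_or] at hv
            rcases hv with h | h
            · push_neg at h; exact le_abs.2 (Or.inr (by linarith))
            · push_neg at h; exact le_abs.2 (Or.inl (by linarith))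
          rw [hfz q.1 q.2 v (Or.inr hv'), mul_zero, norm_zero]
      · exact integrable_indicator_const isCompact_Icc Cf
      · apply Filter.Eventually.of_forall
        intro v
        exact continuous_const.mul (hfcont.comp
          ((continuous_fst.prodMk (continuous_snd.prodMk continuous_const)) :
            Continuous (fun q : ℝ×ℝ => (q.1, q.2, v))))
    exact this
  -- value of E1 derivative on [0,T]
  have hval : ∀ t ∈ Icc (0:ℝ) T,
      (∫ p : ℝ×ℝ, Real.sqrt (1 + p.2 ^ 2) * Psif f (t,p.1,p.2) (1,0,0))
        = -(∫ x : ℝ, PsiA A (t,x) (1,0) * jcur f t x) := by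
    intro t ht
    have hvl : ∀ x v : ℝ, Psif f (t,x,v) (1,0,0)
        = -(vhat v * Psif f (t,x,v) (0,1,0)) + PsiA A (t,x) (1,0) * Psif f (t,x,v) (0,0,1) := by
      intro x v
      have h := hvlasov t ht x v
      rw [(hasDerivAt_f1 hf' t x v).deriv, (hasDerivAt_f2 hf' t x v).deriv,
        (hasDerivAt_f3 hf' t x v).deriv, pt_eqPsi hA'] at h
      linarith
    have hG1cont : Continuous (fun p : ℝ×ℝ =>
        (Real.sqrt (1 + p.2 ^ 2) * vhat p.2) * Psif f (t,p.1,p.2) (0,1,0)) :=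
      ((continuous_esqrt.comp continuous_snd).mul (continuous_vhat.comp continuous_snd)).mul
        (((ContinuousLinearMap.apply ℝ ℝ ((0:ℝ),(1:ℝ),(0:ℝ))).continuous.comp hPsifc).comp
          (continuous_const.prodMk continuous_id))
    have hG2cont : Continuous (fun p : ℝ×ℝ =>
        PsiA A (t,p.1) (1,0) * (Real.sqrt (1 + p.2 ^ 2) * Psif f (t,p.1,p.2) (0,0,1))) := by
      apply Continuous.mul
      · exact ((ContinuousLinearMap.apply ℝ ℝ ((1:ℝ),(0:ℝ))).continuous.comp hPsiAc).comp
          (continuous_const.prodMk continuous_fst)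
      · exact (continuous_esqrt.comp continuous_snd).mul
          (((ContinuousLinearMap.apply ℝ ℝ ((0:ℝ),(0:ℝ),(1:ℝ))).continuous.comp hPsifc).comp
            (continuous_const.prodMk continuous_id))
    have hG1z : ∀ p : ℝ×ℝ, p ∉ K2 →
        (Real.sqrt (1 + p.2 ^ 2) * vhat p.2) * Psif f (t,p.1,p.2) (0,1,0) = 0 := by
      intro p hp; rw [hPsifz t p.1 p.2 (hK2c p hp)]; simp
    have hG2z : ∀ p : ℝ×ℝ, p ∉ K2 →
        PsiA A (t,p.1) (1,0) * (Real.sqrt (1 + p.2 ^ 2) * Psif f (t,p.1,p.2) (0,0,1)) = 0 := by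
      intro p hp; rw [hPsifz t p.1 p.2 (hK2c p hp)]; simp
    have hG1int : Integrable (fun p : ℝ×ℝ =>
        (Real.sqrt (1 + p.2 ^ 2) * vhat p.2) * Psif f (t,p.1,p.2) (0,1,0)) :=
      hG1cont.integrable_of_hasCompactSupport (HasCompactSupport.intro hK2 hG1z)
    have hG2int : Integrable (fun p : ℝ×ℝ =>
        PsiA A (t,p.1) (1,0) * (Real.sqrt (1 + p.2 ^ 2) * Psif f (t,p.1,p.2) (0,0,1))) :=
      hG2cont.integrable_of_hasCompactSupport (HasCompactSupport.intro hK2 hG2z)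
    have hsplit : (fun p : ℝ×ℝ => Real.sqrt (1 + p.2 ^ 2) * Psif f (t,p.1,p.2) (1,0,0))
        = fun p : ℝ×ℝ => PsiA A (t,p.1) (1,0) * (Real.sqrt (1 + p.2 ^ 2) * Psif f (t,p.1,p.2) (0,0,1))
          - (Real.sqrt (1 + p.2 ^ 2) * vhat p.2) * Psif f (t,p.1,p.2) (0,1,0) := by
      funext p
      rw [hvl p.1 p.2]
      ring
    rw [hsplit, integral_sub hG2int hG1int]
    -- first integral is zero
    have hI1 : (∫ p : ℝ×ℝ, (Real.sqrt (1 + p.2 ^ 2) * vhat p.2) * Psif f (t,p.1,p.2) (0,1,0)) = 0 := by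
      rw [(prod_integral_eqs hG1cont hK2 hG1z).2]
      have hinner : ∀ v : ℝ,
          (∫ x : ℝ, (Real.sqrt (1 + v ^ 2) * vhat v) * Psif f (t,x,v) (0,1,0)) = 0 := by
        intro v
        rw [MeasureTheory.integral_const_mul]
        have h0 : (∫ x : ℝ, Psif f (t,x,v) (0,1,0)) = 0 := by
          apply integral_deriv_zero (g := fun x => f t x v)
          · exact fun x => hasDerivAt_f2 hf' t x v
          · exact ((ContinuousLinearMap.apply ℝ ℝ ((0:ℝ),(1:ℝ),(0:ℝ))).continuous.comp hPsifc).comp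
              ((continuous_const.prodMk (continuous_id.prodMk continuous_const)) :
                Continuous (fun x : ℝ => (t, x, v)))
          · apply HasCompactSupport.intro (isCompact_Icc (a := -Rf) (b := Rf))
            intro x hx
            apply hfz t x v
            left
            rw [mem_Icc, not_and_or] at hx
            rcases hx with h | h
            · push_neg at h; exact le_abs.2 (Or.inr (by linarith))
            · push_neg at h; exact le_abs.2 (Or.inl (by linarith))
        rw [h0, mul_zero]
      have : (fun v : ℝ => ∫ x : ℝ, (Real.sqrt (1 + v ^ 2) * vhat v) * Psif f (t,x,v) (0,1,0))
          = fun _ => (0:ℝ) := funext hinner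
      rw [this, integral_zero]
    rw [hI1, sub_zero]
    -- second integral via integration by parts in v
    have hbp : ∀ x : ℝ, (∫ v : ℝ, Real.sqrt (1 + v ^ 2) * Psif f (t,x,v) (0,0,1))
        = -(jcur f t x) := by
      intro x
      have hder : ∀ v : ℝ, HasDerivAt (fun w => Real.sqrt (1 + w ^ 2) * f t x w)
          (vhat v * f t x v + Real.sqrt (1 + v ^ 2) * Psif f (t,x,v) (0,0,1)) v := by
        intro v
        have := (hasDerivAt_esqrt v).mul (hasDerivAt_f3 hf' t x v)
        exact this
      have hc1 : Continuous (fun v => vhat v * f t x v) :=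
        continuous_vhat.mul (hfcont.comp
          ((continuous_const.prodMk (continuous_const.prodMk continuous_id)) :
            Continuous (fun v : ℝ => (t, x, v))))
      have hc2 : Continuous (fun v => Real.sqrt (1 + v ^ 2) * Psif f (t,x,v) (0,0,1)) :=
        continuous_esqrt.mul
          (((ContinuousLinearMap.apply ℝ ℝ ((0:ℝ),(0:ℝ),(1:ℝ))).continuous.comp hPsifc).comp
            ((continuous_const.prodMk (continuous_const.prodMk continuous_id)) :
              Continuous (fun v : ℝ => (t, x, v))))
      have hsupp : ∀ v : ℝ, v ∉ Icc (-Rf) Rf → f t x v = 0 := by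
        intro v hv
        apply hfz t x v
        right
        rw [mem_Icc, not_and_or] at hv
        rcases hv with h | h
        · push_neg at h; exact le_abs.2 (Or.inr (by linarith))
        · push_neg at h; exact le_abs.2 (Or.inl (by linarith))
      have hsupp2 : ∀ v : ℝ, v ∉ Icc (-Rf) Rf → Psif f (t,x,v) = 0 := by
        intro v hv
        apply hPsifz t x v
        right
        rw [mem_Icc, not_and_or] at hv
        rcases hv with h | h
        · push_neg at h; exact le_abs.2 (Or.inr (by linarith))
        · push_neg at h; exact le_abs.2 (Or.inl (by linarith))
      have h0 : (∫ v : ℝ, (vhat v * f t x v + Real.sqrt (1 + v ^ 2) * Psif f (t,x,v) (0,0,1))) = 0 := by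
        apply integral_deriv_zero hder (hc1.add hc2)
        apply HasCompactSupport.intro (isCompact_Icc (a := -Rf) (b := Rf))
        intro v hv
        rw [hsupp v hv, mul_zero]
      have hi1 : Integrable (fun v => vhat v * f t x v) := by
        apply hc1.integrable_of_hasCompactSupport
        apply HasCompactSupport.intro (isCompact_Icc (a := -Rf) (b := Rf))
        intro v hv; rw [hsupp v hv, mul_zero]
      have hi2 : Integrable (fun v => Real.sqrt (1 + v ^ 2) * Psif f (t,x,v) (0,0,1)) := by
        apply hc2.integrable_of_hasCompactSupport
        apply HasCompactSupport.intro (isCompact_Icc (a := -Rf) (b := Rf))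
        intro v hv; rw [hsupp2 v hv]; simp
      rw [integral_add hi1 hi2] at h0
      have : jcur f t x = ∫ v : ℝ, vhat v * f t x v := rfl
      rw [this]
      linarith
    rw [(prod_integral_eqs hG2cont hK2 hG2z).1]
    have hinner2 : ∀ x : ℝ,
        (∫ v : ℝ, PsiA A (t,x) (1,0) * (Real.sqrt (1 + v ^ 2) * Psif f (t,x,v) (0,0,1)))
          = -(PsiA A (t,x) (1,0) * jcur f t x) := by
      intro x
      rw [MeasureTheory.integral_const_mul, hbp x]
      ring
    have : (fun x : ℝ => ∫ v : ℝ, PsiA A (t,x) (1,0) * (Real.sqrt (1 + v ^ 2) * Psif f (t,x,v) (0,0,1)))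
        = fun x : ℝ => -(PsiA A (t,x) (1,0) * jcur f t x) := funext hinner2
    rw [this, integral_neg]
  -- uniform support for PsiA on [0,T]
  have h0T : (0:ℝ) ∈ Icc 0 T := left_mem_Icc.2 hT.le
  have hK0 : IsCompact (tsupport (fun x => pt A 0 x) ∪ tsupport (fun x => px A 0 x)) :=
    (hAt 0 h0T).union (hAx 0 h0T)
  obtain ⟨r0, hr0⟩ := hK0.isBounded.subset_closedBall 0
  set R0 : ℝ := |r0| + 1 with hR0def
  have hR01 : 1 ≤ R0 := by have := abs_nonneg r0; simp only [hR0def]; linarith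
  have hu0 : ∀ c : ℝ, R0 ≤ |c| → PsiA A (0,c) (1,0) = 0 ∧ PsiA A (0,c) (0,1) = 0 := by
    intro c hc
    have hnot : c ∉ tsupport (fun x => pt A 0 x) ∪ tsupport (fun x => px A 0 x) := by
      intro hmem
      have := hr0 hmem
      rw [Metric.mem_closedBall, dist_zero_right, Real.norm_eq_abs] at this
      have h2 : r0 ≤ |r0| := le_abs_self r0
      simp only [hR0def] at hc; linarith
    rw [mem_union, not_or] at hnot
    constructor
    · rw [← pt_eqPsi hA']
      exact image_eq_zero_of_notMem_tsupport hnot.1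
    · rw [← px_eqPsi hA']
      exact image_eq_zero_of_notMem_tsupport hnot.2
  set M : ℝ := Rf + R0 + T + 1 with hMdef
  have hsub1 : ∀ (p : ℝ×ℝ) (a : ℝ×ℝ), XiA A p ((1:ℝ),(-1:ℝ)) a = XiA A p (1,0) a - XiA A p (0,1) a := by
    intro p a
    have h : ((1:ℝ),(-1:ℝ)) = (((1:ℝ),(0:ℝ)) - ((0:ℝ),(1:ℝ)) : ℝ×ℝ) := by
      rw [Prod.ext_iff]; norm_num
    rw [h, map_sub, ContinuousLinearMap.sub_apply]
  have hsub2 : ∀ (p : ℝ×ℝ) (a : ℝ×ℝ), XiA A p ((1:ℝ),(1:ℝ)) a = XiA A p (1,0) a + XiA A p (0,1) a := by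
    intro p a
    have h : ((1:ℝ),(1:ℝ)) = (((1:ℝ),(0:ℝ)) + ((0:ℝ),(1:ℝ)) : ℝ×ℝ) := by
      rw [Prod.ext_iff]; norm_num
    rw [h, map_add, ContinuousLinearMap.add_apply]
  have transport : ∀ t ∈ Icc (0:ℝ) T, ∀ x : ℝ, M ≤ |x| →
      PsiA A (t,x) (1,0) = 0 ∧ PsiA A (t,x) (0,1) = 0 := by
    intro t ht x hx
    -- the two characteristic identities
    have habs : ∀ s ∈ Icc (0:ℝ) t, |s - t| ≤ T := by
      intro s hs
      exact abs_le.2 ⟨by linarith [hs.1, hs.2, ht.1, ht.2, hT.le], by linarith [hs.1, hs.2, ht.1, ht.2, hT.le]⟩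
    -- P part, curve s ↦ (s, (x+t) - s)
    have hcurveP : Continuous (fun s : ℝ => (s, (x+t) - s)) :=
      continuous_id.prodMk (continuous_const.sub continuous_id)
    have hP : ∀ s : ℝ, HasDerivAt
        (fun s' => PsiA A (s', (x+t) - s') (1,0) + PsiA A (s', (x+t) - s') (0,1))
        (XiA A (s, (x+t)-s) ((1:ℝ),(-1:ℝ)) (1,0) + XiA A (s,(x+t)-s) ((1:ℝ),(-1:ℝ)) (0,1)) s := by
      intro s
      have hγ : HasDerivAt (fun s' : ℝ => (s', (x+t) - s')) ((1:ℝ), (-1:ℝ)) s := by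
        have := (hasDerivAt_id s).prodMk ((hasDerivAt_const s (x+t)).sub (hasDerivAt_id s))
        simpa using this
      have h1 := (hasFDerivAt_PsiA_apply hA' (1,0) (s, (x+t)-s)).comp_hasDerivAt s hγ
      have h2 := (hasFDerivAt_PsiA_apply hA' (0,1) (s, (x+t)-s)).comp_hasDerivAt s hγ
      exact h1.add h2
    have hcontP : Continuous (fun s : ℝ =>
        XiA A (s, (x+t)-s) ((1:ℝ),(-1:ℝ)) (1,0) + XiA A (s,(x+t)-s) ((1:ℝ),(-1:ℝ)) (0,1)) := by
      have hc0 : Continuous (fun s : ℝ => XiA A (s, (x+t)-s) ((1:ℝ),(-1:ℝ))) :=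
        (ContinuousLinearMap.apply ℝ ((ℝ×ℝ) →L[ℝ] ℝ) ((1:ℝ),(-1:ℝ))).continuous.comp
          (hXiAc.comp hcurveP)
      exact ((ContinuousLinearMap.apply ℝ ℝ ((1:ℝ),(0:ℝ))).continuous.comp hc0).add
        ((ContinuousLinearMap.apply ℝ ℝ ((0:ℝ),(1:ℝ))).continuous.comp hc0)
    have hzeroP : ∀ s ∈ uIcc (0:ℝ) t,
        XiA A (s, (x+t)-s) ((1:ℝ),(-1:ℝ)) (1,0) + XiA A (s,(x+t)-s) ((1:ℝ),(-1:ℝ)) (0,1) = 0 := by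
      intro s hs
      rw [uIcc_of_le ht.1] at hs
      have hsT : s ∈ Icc (0:ℝ) T := ⟨hs.1, le_trans hs.2 ht.2⟩
      have hXw := hwave s hsT ((x+t)-s)
      rw [ptpt_eqXi hA', pxpx_eqXi hA'] at hXw
      have hfar : Rf ≤ |(x+t) - s| := by
        have h1 : |s - t| ≤ T := habs s hs
        have h2 : |x| ≤ |(x + t) - s| + |s - t| := by
          have hxe : x = ((x+t)-s) + (s - t) := by ring
          calc |x| = |((x+t)-s) + (s-t)| := by rw [← hxe]
            _ ≤ |(x+t)-s| + |s-t| := abs_add_le _ _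
        simp only [hMdef] at hx
        linarith [hR01]
      have hj : jcur f s ((x+t)-s) = 0 := hjz s _ hfar
      rw [hj] at hXw
      have hsym := XiA_symm hA' (s,(x+t)-s) (0,1) (1,0)
      rw [hsub1, hsub1]
      linarith
    have hFTCP := intervalIntegral.integral_eq_sub_of_hasDerivAt
      (f := fun s' => PsiA A (s', (x+t) - s') (1,0) + PsiA A (s', (x+t) - s') (0,1))
      (f' := fun s => XiA A (s, (x+t)-s) ((1:ℝ),(-1:ℝ)) (1,0)
        + XiA A (s,(x+t)-s) ((1:ℝ),(-1:ℝ)) (0,1))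
      (a := 0) (b := t) (fun s _ => hP s) (hcontP.intervalIntegrable 0 t)
    rw [intervalIntegral.integral_congr (g := fun _ => (0:ℝ)) hzeroP] at hFTCP
    rw [intervalIntegral.integral_const, smul_zero] at hFTCP
    have hfar0 : R0 ≤ |x + t| := by
      have h2 : |x| ≤ |x + t| + T := by
        have hxe : x = (x+t) + (-t) := by ring
        calc |x| = |(x+t) + (-t)| := by rw [← hxe]
          _ ≤ |x+t| + |(-t)| := abs_add_le _ _
          _ ≤ |x+t| + T := by
              have : |(-t)| = |t| := abs_neg t
              rw [this, abs_of_nonneg ht.1]; linarith [ht.2]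
      simp only [hMdef] at hx
      linarith [hRf0]
    have hP0 := hu0 (x + t) hfar0
    have hPt : PsiA A (t,x) (1,0) + PsiA A (t,x) (0,1) = 0 := by
      have hxx : (x + t) - t = x := by ring
      beta_reduce at hFTCP
      rw [hxx, sub_zero, hP0.1, hP0.2] at hFTCP
      linarith
    -- Q part, curve s ↦ (s, (x-t) + s)
    have hcurveQ : Continuous (fun s : ℝ => (s, (x-t) + s)) :=
      continuous_id.prodMk (continuous_const.add continuous_id)
    have hQ : ∀ s : ℝ, HasDerivAt
        (fun s' => PsiA A (s', (x-t) + s') (1,0) - PsiA A (s', (x-t) + s') (0,1))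
        (XiA A (s, (x-t)+s) ((1:ℝ),(1:ℝ)) (1,0) - XiA A (s,(x-t)+s) ((1:ℝ),(1:ℝ)) (0,1)) s := by
      intro s
      have hγ : HasDerivAt (fun s' : ℝ => (s', (x-t) + s')) ((1:ℝ), (1:ℝ)) s := by
        have := (hasDerivAt_id s).prodMk ((hasDerivAt_const s (x-t)).add (hasDerivAt_id s))
        simpa using this
      have h1 := (hasFDerivAt_PsiA_apply hA' (1,0) (s, (x-t)+s)).comp_hasDerivAt s hγ
      have h2 := (hasFDerivAt_PsiA_apply hA' (0,1) (s, (x-t)+s)).comp_hasDerivAt s hγ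
      exact h1.sub h2
    have hcontQ : Continuous (fun s : ℝ =>
        XiA A (s, (x-t)+s) ((1:ℝ),(1:ℝ)) (1,0) - XiA A (s,(x-t)+s) ((1:ℝ),(1:ℝ)) (0,1)) := by
      have hc0 : Continuous (fun s : ℝ => XiA A (s, (x-t)+s) ((1:ℝ),(1:ℝ))) :=
        (ContinuousLinearMap.apply ℝ ((ℝ×ℝ) →L[ℝ] ℝ) ((1:ℝ),(1:ℝ))).continuous.comp
          (hXiAc.comp hcurveQ)
      exact ((ContinuousLinearMap.apply ℝ ℝ ((1:ℝ),(0:ℝ))).continuous.comp hc0).sub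
        ((ContinuousLinearMap.apply ℝ ℝ ((0:ℝ),(1:ℝ))).continuous.comp hc0)
    have hzeroQ : ∀ s ∈ uIcc (0:ℝ) t,
        XiA A (s, (x-t)+s) ((1:ℝ),(1:ℝ)) (1,0) - XiA A (s,(x-t)+s) ((1:ℝ),(1:ℝ)) (0,1) = 0 := by
      intro s hs
      rw [uIcc_of_le ht.1] at hs
      have hsT : s ∈ Icc (0:ℝ) T := ⟨hs.1, le_trans hs.2 ht.2⟩
      have hXw := hwave s hsT ((x-t)+s)
      rw [ptpt_eqXi hA', pxpx_eqXi hA'] at hXw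
      have hfar : Rf ≤ |(x-t) + s| := by
        have h1 : |s - t| ≤ T := habs s hs
        have h2 : |x| ≤ |(x - t) + s| + |s - t| := by
          have hxe : x = ((x-t)+s) + (t - s) := by ring
          calc |x| = |((x-t)+s) + (t-s)| := by rw [← hxe]
            _ ≤ |(x-t)+s| + |t-s| := abs_add_le _ _
            _ = |(x-t)+s| + |s-t| := by rw [abs_sub_comm]
        simp only [hMdef] at hx
        linarith [hR01]
      have hj : jcur f s ((x-t)+s) = 0 := hjz s _ hfar
      rw [hj] at hXw
      have hsym := XiA_symm hA' (s,(x-t)+s) (0,1) (1,0)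
      rw [hsub2, hsub2]
      linarith
    have hFTCQ := intervalIntegral.integral_eq_sub_of_hasDerivAt
      (f := fun s' => PsiA A (s', (x-t) + s') (1,0) - PsiA A (s', (x-t) + s') (0,1))
      (f' := fun s => XiA A (s, (x-t)+s) ((1:ℝ),(1:ℝ)) (1,0)
        - XiA A (s,(x-t)+s) ((1:ℝ),(1:ℝ)) (0,1))
      (a := 0) (b := t) (fun s _ => hQ s) (hcontQ.intervalIntegrable 0 t)
    rw [intervalIntegral.integral_congr (g := fun _ => (0:ℝ)) hzeroQ] at hFTCQ
    rw [intervalIntegral.integral_const, smul_zero] at hFTCQ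
    have hfar0' : R0 ≤ |x - t| := by
      have h2 : |x| ≤ |x - t| + T := by
        have hxe : x = (x-t) + t := by ring
        calc |x| = |(x-t) + t| := by rw [← hxe]
          _ ≤ |x-t| + |t| := abs_add_le _ _
          _ ≤ |x-t| + T := by rw [abs_of_nonneg ht.1]; linarith [ht.2]
      simp only [hMdef] at hx
      linarith [hRf0]
    have hQ0 := hu0 (x - t) hfar0'
    have hQt : PsiA A (t,x) (1,0) - PsiA A (t,x) (0,1) = 0 := by
      have hxx : (x - t) + t = x := by ring
      beta_reduce at hFTCQ
      rw [hxx, add_zero, hQ0.1, hQ0.2] at hFTCQ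
      linarith
    exact ⟨by linarith, by linarith⟩
  have hMpos : 0 < M := by simp only [hMdef]; linarith [hRf0, hR01, hT.le]
  have hout2 : ∀ x : ℝ, x ∉ Icc (-M) M → M ≤ |x| := by
    intro x hx
    rw [mem_Icc, not_and_or] at hx
    rcases hx with h | h
    · push_neg at h; exact le_abs.2 (Or.inr (by linarith))
    · push_neg at h; exact le_abs.2 (Or.inl (by linarith))
  have hKTM : IsCompact (Icc (0:ℝ) T ×ˢ Icc (-M) M) := isCompact_Icc.prod isCompact_Icc
  -- joint continuity pieces
  have hu_c : Continuous (fun p : ℝ×ℝ => PsiA A p (1,0)) :=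
    (ContinuousLinearMap.apply ℝ ℝ ((1:ℝ),(0:ℝ))).continuous.comp hPsiAc
  have hw_c : Continuous (fun p : ℝ×ℝ => PsiA A p (0,1)) :=
    (ContinuousLinearMap.apply ℝ ℝ ((0:ℝ),(1:ℝ))).continuous.comp hPsiAc
  have hX_c : ∀ a b : ℝ×ℝ, Continuous (fun p : ℝ×ℝ => XiA A p a b) := by
    intro a b
    exact (ContinuousLinearMap.apply ℝ ℝ b).continuous.comp
      ((ContinuousLinearMap.apply ℝ ((ℝ×ℝ) →L[ℝ] ℝ) a).continuous.comp hXiAc)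
  have hF2joint : Continuous (fun p : ℝ×ℝ => PsiA A p (1,0) ^ 2 + PsiA A p (0,1) ^ 2) :=
    (hu_c.pow 2).add (hw_c.pow 2)
  have hF2'joint : Continuous (fun p : ℝ×ℝ =>
      2 * PsiA A p (1,0) * XiA A p (1,0) (1,0) + 2 * PsiA A p (0,1) * XiA A p (1,0) (0,1)) :=
    (((continuous_const.mul hu_c).mul (hX_c (1,0) (1,0)))).add
      ((continuous_const.mul hw_c).mul (hX_c (1,0) (0,1)))
  obtain ⟨C2, hC2⟩ := hKTM.exists_bound_of_continuousOn hF2'joint.continuousOn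
  obtain ⟨C3, hC3⟩ := hKTM.exists_bound_of_continuousOn hF2joint.continuousOn
  -- E2 derivative
  have hE2d : ∀ t ∈ Ioo (0:ℝ) T, HasDerivAt
      (fun s => ∫ x : ℝ, (PsiA A (s,x) (1,0) ^ 2 + PsiA A (s,x) (0,1) ^ 2))
      (∫ x : ℝ, (2 * PsiA A (t,x) (1,0) * XiA A (t,x) (1,0) (1,0)
        + 2 * PsiA A (t,x) (0,1) * XiA A (t,x) (1,0) (0,1))) t := by
    intro t ht
    have hε : 0 < min t (T - t) := lt_min ht.1 (by linarith [ht.2])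
    have hball : ∀ s ∈ Metric.ball t (min t (T - t)), s ∈ Icc (0:ℝ) T := by
      intro s hs
      rw [Metric.mem_ball, Real.dist_eq, abs_sub_lt_iff] at hs
      have h1 := lt_of_lt_of_le hs.2 (min_le_left _ _)
      have h2 := lt_of_lt_of_le hs.1 (min_le_right _ _)
      exact ⟨by linarith, by linarith⟩
    apply hasDerivAt_integral_param
      (F := fun s (x : ℝ) => PsiA A (s,x) (1,0) ^ 2 + PsiA A (s,x) (0,1) ^ 2)
      (F' := fun s (x : ℝ) => 2 * PsiA A (s,x) (1,0) * XiA A (s,x) (1,0) (1,0)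
        + 2 * PsiA A (s,x) (0,1) * XiA A (s,x) (1,0) (0,1))
      (bound := (Icc (-M) M).indicator fun _ => C2) hε
    · intro s
      exact (hF2joint.comp ((continuous_const.prodMk continuous_id) :
        Continuous (fun x : ℝ => (s, x)))).aestronglyMeasurable
    · exact (hF2'joint.comp ((continuous_const.prodMk continuous_id) :
        Continuous (fun x : ℝ => (t, x)))).aestronglyMeasurable
    · apply Continuous.integrable_of_hasCompactSupport
      · exact hF2joint.comp ((continuous_const.prodMk continuous_id) :
          Continuous (fun x : ℝ => (t, x)))
      · apply HasCompactSupport.intro (isCompact_Icc (a := -M) (b := M))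
        intro x hx
        obtain ⟨h1, h2⟩ := transport t (Ioo_subset_Icc_self ht) x (hout2 x hx)
        show PsiA A (t,x) (1,0) ^ 2 + PsiA A (t,x) (0,1) ^ 2 = 0
        rw [h1, h2]
        ring
    · exact integrable_indicator_const isCompact_Icc C2
    · intro x s hs
      by_cases hx : x ∈ Icc (-M) M
      · rw [indicator_of_mem hx]
        have := hC2 (s, x) (mk_mem_prod (hball s hs) hx)
        rwa [Real.norm_eq_abs] at this
      · rw [indicator_of_notMem hx]
        obtain ⟨h1, h2⟩ := transport s (hball s hs) x (hout2 x hx)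
        rw [h1, h2]
        simp
    · intro x s _
      have h1 := (hasDerivAt_u_t hA' (1,0) s x).pow 2
      have h2 := (hasDerivAt_u_t hA' (0,1) s x).pow 2
      refine (h1.add h2).congr_deriv ?_
      push_cast
      ring
  -- E2 derivative value
  have hE2val : ∀ t ∈ Ioo (0:ℝ) T,
      (∫ x : ℝ, (2 * PsiA A (t,x) (1,0) * XiA A (t,x) (1,0) (1,0)
        + 2 * PsiA A (t,x) (0,1) * XiA A (t,x) (1,0) (0,1)))
      = 2 * ∫ x : ℝ, PsiA A (t,x) (1,0) * jcur f t x := by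
    intro t ht
    have hticc := Ioo_subset_Icc_self ht
    have hptw : ∀ x : ℝ, XiA A (t,x) (1,0) (1,0) = XiA A (t,x) (0,1) (0,1) + jcur f t x := by
      intro x
      have h := hwave t hticc x
      rw [ptpt_eqXi hA', pxpx_eqXi hA'] at h
      linarith
    have hsplit2 : (fun x : ℝ => 2 * PsiA A (t,x) (1,0) * XiA A (t,x) (1,0) (1,0)
        + 2 * PsiA A (t,x) (0,1) * XiA A (t,x) (1,0) (0,1))
        = fun x : ℝ => 2 * (PsiA A (t,x) (1,0) * jcur f t x)
          + 2 * (XiA A (t,x) (0,1) (1,0) * PsiA A (t,x) (0,1)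
            + PsiA A (t,x) (1,0) * XiA A (t,x) (0,1) (0,1)) := by
      funext x
      rw [hptw x, XiA_symm hA' (t,x) (1,0) (0,1)]
      ring
    have hcont_tx : Continuous (fun x : ℝ => (t, x)) := continuous_const.prodMk continuous_id
    have hintA : Integrable (fun x : ℝ => 2 * (PsiA A (t,x) (1,0) * jcur f t x)) := by
      apply Continuous.integrable_of_hasCompactSupport
      · exact continuous_const.mul ((hu_c.comp hcont_tx).mul (hjcont.comp hcont_tx))
      · apply HasCompactSupport.intro (isCompact_Icc (a := -M) (b := M))
        intro x hx
        rw [(transport t hticc x (hout2 x hx)).1]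
        ring
    have hintB : Integrable (fun x : ℝ => 2 * (XiA A (t,x) (0,1) (1,0) * PsiA A (t,x) (0,1)
        + PsiA A (t,x) (1,0) * XiA A (t,x) (0,1) (0,1))) := by
      apply Continuous.integrable_of_hasCompactSupport
      · exact continuous_const.mul
          ((((hX_c (0,1) (1,0)).comp hcont_tx).mul (hw_c.comp hcont_tx)).add
            ((hu_c.comp hcont_tx).mul ((hX_c (0,1) (0,1)).comp hcont_tx)))
      · apply HasCompactSupport.intro (isCompact_Icc (a := -M) (b := M))
        intro x hx
        obtain ⟨h1, h2⟩ := transport t hticc x (hout2 x hx)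
        rw [h1, h2]
        ring
    rw [hsplit2, integral_add hintA hintB, MeasureTheory.integral_const_mul,
      MeasureTheory.integral_const_mul]
    have hD0 : (∫ x : ℝ, (XiA A (t,x) (0,1) (1,0) * PsiA A (t,x) (0,1)
        + PsiA A (t,x) (1,0) * XiA A (t,x) (0,1) (0,1))) = 0 := by
      apply integral_deriv_zero
        (g := fun y => PsiA A (t,y) (1,0) * PsiA A (t,y) (0,1))
      · exact fun y => (hasDerivAt_u_x hA' (1,0) t y).mul (hasDerivAt_u_x hA' (0,1) t y)
      · exact (((hX_c (0,1) (1,0)).comp hcont_tx).mul (hw_c.comp hcont_tx)).add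
          ((hu_c.comp hcont_tx).mul ((hX_c (0,1) (0,1)).comp hcont_tx))
      · apply HasCompactSupport.intro (isCompact_Icc (a := -M) (b := M))
        intro x hx
        rw [(transport t hticc x (hout2 x hx)).1]
        ring
    rw [hD0]
    ring
  -- continuity of E2 on [0,T]
  have hE2cont : ContinuousOn
      (fun s => ∫ x : ℝ, (PsiA A (s,x) (1,0) ^ 2 + PsiA A (s,x) (0,1) ^ 2)) (Icc 0 T) := by
    intro t₀ ht₀
    apply continuousWithinAt_of_dominated
      (bound := (Icc (-M) M).indicator fun _ => C3)
    · apply Filter.Eventually.of_forall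
      intro s
      exact (hF2joint.comp ((continuous_const.prodMk continuous_id) :
        Continuous (fun x : ℝ => (s, x)))).aestronglyMeasurable
    · filter_upwards [self_mem_nhdsWithin] with s hs
      apply Filter.Eventually.of_forall
      intro x
      beta_reduce
      by_cases hx : x ∈ Icc (-M) M
      · rw [indicator_of_mem hx]
        exact hC3 (s, x) (mk_mem_prod hs hx)
      · rw [indicator_of_notMem hx]
        obtain ⟨h1, h2⟩ := transport s hs x (hout2 x hx)
        rw [Real.norm_eq_abs, h1, h2]
        simp
    · exact integrable_indicator_const isCompact_Icc C3
    · apply Filter.Eventually.of_forall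
      intro x
      exact ((hF2joint.comp ((continuous_id.prodMk continuous_const) :
        Continuous (fun s : ℝ => (s, x)))).continuousAt).continuousWithinAt
  -- continuity of E1
  have hE1cont : Continuous (fun s => ∫ p : ℝ×ℝ, Real.sqrt (1 + p.2 ^ 2) * f s p.1 p.2) :=
    continuous_iff_continuousAt.2 fun t => (hE1d t).continuousAt
  -- the energy is constant
  have Hd : ∀ t ∈ Ioo (0:ℝ) T, HasDerivAt
      (fun s => (∫ p : ℝ×ℝ, Real.sqrt (1 + p.2 ^ 2) * f s p.1 p.2)
        + (1/2) * ∫ x : ℝ, (PsiA A (s,x) (1,0) ^ 2 + PsiA A (s,x) (0,1) ^ 2)) 0 t := by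
    intro t ht
    have h1 := hE1d t
    rw [hval t (Ioo_subset_Icc_self ht)] at h1
    have h2 := (hE2d t ht).const_mul ((1:ℝ)/2)
    rw [hE2val t ht] at h2
    have h3 := h1.add h2
    have heq : -(∫ x : ℝ, PsiA A (t,x) (1,0) * jcur f t x)
        + (1/2) * (2 * ∫ x : ℝ, PsiA A (t,x) (1,0) * jcur f t x) = 0 := by ring
    rwa [heq] at h3
  have Hcont : ContinuousOn
      (fun s => (∫ p : ℝ×ℝ, Real.sqrt (1 + p.2 ^ 2) * f s p.1 p.2)
        + (1/2) * ∫ x : ℝ, (PsiA A (s,x) (1,0) ^ 2 + PsiA A (s,x) (0,1) ^ 2)) (Icc 0 T) :=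
    (hE1cont.continuousOn).add (continuousOn_const.mul hE2cont)
  have Hc := const_of_interior_deriv hT Hcont Hd
  -- final rewriting
  intro t ht
  have hiter : ∀ s : ℝ, (∫ x : ℝ, ∫ v : ℝ, Real.sqrt (1 + v ^ 2) * f s x v)
      = ∫ p : ℝ×ℝ, Real.sqrt (1 + p.2 ^ 2) * f s p.1 p.2 := by
    intro s
    have hc : Continuous (fun p : ℝ×ℝ => Real.sqrt (1 + p.2 ^ 2) * f s p.1 p.2) :=
      (continuous_esqrt.comp continuous_snd).mul
        (hfcont.comp (continuous_const.prodMk continuous_id))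
    have hz : ∀ p : ℝ×ℝ, p ∉ K2 → Real.sqrt (1 + p.2 ^ 2) * f s p.1 p.2 = 0 := by
      intro p hp
      rw [hfz s p.1 p.2 (hK2c p hp), mul_zero]
    exact ((prod_integral_eqs hc hK2 hz).1).symm
  have habs2 : ∀ s : ℝ, (∫ x : ℝ, (|pt A s x| ^ 2 + |px A s x| ^ 2))
      = ∫ x : ℝ, (PsiA A (s,x) (1,0) ^ 2 + PsiA A (s,x) (0,1) ^ 2) := by
    intro s
    have hfun : (fun x : ℝ => |pt A s x| ^ 2 + |px A s x| ^ 2)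
        = fun x : ℝ => PsiA A (s,x) (1,0) ^ 2 + PsiA A (s,x) (0,1) ^ 2 :=
      funext fun x => by rw [sq_abs, sq_abs, pt_eqPsi hA', px_eqPsi hA']
    rw [hfun]
  have h := Hc t ht
  beta_reduce at h
  rw [hiter t, hiter 0, habs2 t, habs2 0]
  exact h
end

section
/- Division lemma in test-function form (Lemma A.1): let a ∈ (−1,1) and let φ : ℝ² → ℝ be a smooth compactly supported function. Define Λ(φ) = (1/(2(a+1))) ∫₀^∞ φ(t,−t) dt − (1/(2(a−1))) ∫₀^∞ φ(t,t) dt. Then −Λ(∂ₜφ + a ∂ₓφ) = −(1/(a²−1)) φ(0,0) + (1/2) ∫₀^∞ ∫_{−t}^{t} ∂ₓₓφ(t,x) dx dt. -/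
open MeasureTheory Set intervalIntegral

/-- The distribution `Λ = m ∂ₓY` (with `Y(t,x) = ½·𝟙_{|x|≤t}` and `m(t,x) = x/(ax-t)`)
evaluated against a test function `ψ`:
`Λ(ψ) = (1/(2(a+1))) ∫₀^∞ ψ(t,-t) dt - (1/(2(a-1))) ∫₀^∞ ψ(t,t) dt`. -/
noncomputable def Lam (a : ℝ) (ψ : ℝ → ℝ → ℝ) : ℝ :=
  (1 / (2 * (a + 1))) * (∫ t in Ioi (0:ℝ), ψ t (-t))
    - (1 / (2 * (a - 1))) * (∫ t in Ioi (0:ℝ), ψ t t)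

/- ### Auxiliary lemmas -/

/-- Compact support is preserved by restriction to a line `t ↦ (t, ε t)`. -/
lemma hcs_line {G : ℝ × ℝ → ℝ} (hG : HasCompactSupport G) (ε : ℝ) :
    HasCompactSupport (fun t => G (t, ε * t)) := by
  apply HasCompactSupport.intro (hG.isCompact.image continuous_fst)
  intro t ht
  by_contra h
  exact ht ⟨(t, ε * t), subset_tsupport G h, rfl⟩

lemma pt_eq (φ : ℝ → ℝ → ℝ) (hφ : ContDiff ℝ (⊤ : ℕ∞) (fun p : ℝ × ℝ => φ p.1 p.2)) (t x : ℝ) :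
    pt φ t x = fderiv ℝ (fun p : ℝ × ℝ => φ p.1 p.2) (t, x) (1, 0) := by
  have hF : HasFDerivAt (fun p : ℝ × ℝ => φ p.1 p.2)
      (fderiv ℝ (fun p : ℝ × ℝ => φ p.1 p.2) (t, x)) (t, x) :=
    (hφ.differentiable (by simp) (t, x)).hasFDerivAt
  have hγ : HasDerivAt (fun s : ℝ => (s, x)) ((1 : ℝ), (0 : ℝ)) t :=
    (hasDerivAt_id t).prodMk (hasDerivAt_const t x)
  have h : HasDerivAt (fun s => φ s x)
      (fderiv ℝ (fun p : ℝ × ℝ => φ p.1 p.2) (t, x) (1, 0)) t := by have := hF.comp_hasDerivAt t hγ; exact this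
  unfold pt
  exact h.deriv

lemma px_eq (φ : ℝ → ℝ → ℝ) (hφ : ContDiff ℝ (⊤ : ℕ∞) (fun p : ℝ × ℝ => φ p.1 p.2)) (t x : ℝ) :
    px φ t x = fderiv ℝ (fun p : ℝ × ℝ => φ p.1 p.2) (t, x) (0, 1) := by
  have hF : HasFDerivAt (fun p : ℝ × ℝ => φ p.1 p.2)
      (fderiv ℝ (fun p : ℝ × ℝ => φ p.1 p.2) (t, x)) (t, x) :=
    (hφ.differentiable (by simp) (t, x)).hasFDerivAt
  have hγ : HasDerivAt (fun y : ℝ => (t, y)) ((0 : ℝ), (1 : ℝ)) x :=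
    (hasDerivAt_const x t).prodMk (hasDerivAt_id x)
  have h : HasDerivAt (fun y => φ t y)
      (fderiv ℝ (fun p : ℝ × ℝ => φ p.1 p.2) (t, x) (0, 1)) x := hF.comp_hasDerivAt x hγ
  unfold px
  exact h.deriv

/-- Chain rule along the line `s ↦ (s, ε s)`. -/
lemma hasDerivAt_line (φ : ℝ → ℝ → ℝ) (hφ : ContDiff ℝ (⊤ : ℕ∞) (fun p : ℝ × ℝ => φ p.1 p.2))
    (ε t : ℝ) :
    HasDerivAt (fun s => φ s (ε * s)) (pt φ t (ε * t) + ε * px φ t (ε * t)) t := by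
  have hF : HasFDerivAt (fun p : ℝ × ℝ => φ p.1 p.2)
      (fderiv ℝ (fun p : ℝ × ℝ => φ p.1 p.2) (t, ε * t)) (t, ε * t) :=
    (hφ.differentiable (by simp) (t, ε * t)).hasFDerivAt
  have hγ : HasDerivAt (fun s : ℝ => (s, ε * s)) ((1 : ℝ), ε) t := by
    have h2 : HasDerivAt (fun s : ℝ => ε * s) ε t := by
      simpa using (hasDerivAt_id t).const_mul ε
    exact (hasDerivAt_id t).prodMk h2
  have hc := hF.comp_hasDerivAt t hγ
  have hsplit : fderiv ℝ (fun p : ℝ × ℝ => φ p.1 p.2) (t, ε * t) ((1 : ℝ), ε)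
      = pt φ t (ε * t) + ε * px φ t (ε * t) := by
    rw [pt_eq φ hφ, px_eq φ hφ]
    have h : ((1 : ℝ), ε) = ((1 : ℝ), (0 : ℝ)) + ε • ((0 : ℝ), (1 : ℝ)) := by
      simp [Prod.ext_iff]
    rw [h, map_add, ContinuousLinearMap.map_smul, smul_eq_mul]
  rw [← hsplit]
  exact hc

/-- Integrability on `(0,∞)` of the space derivative restricted to a line. -/
lemma integrable_px_line (φ : ℝ → ℝ → ℝ)
    (hφ : ContDiff ℝ (⊤ : ℕ∞) (fun p : ℝ × ℝ => φ p.1 p.2))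
    (hφc : HasCompactSupport (fun p : ℝ × ℝ => φ p.1 p.2)) (ε : ℝ) :
    IntegrableOn (fun t => px φ t (ε * t)) (Ioi (0:ℝ)) := by
  have hcont : Continuous (fun p : ℝ × ℝ =>
      fderiv ℝ (fun q : ℝ × ℝ => φ q.1 q.2) p ((0 : ℝ), (1 : ℝ))) :=
    (hφ.continuous_fderiv (by simp)).clm_apply continuous_const
  have hcs : HasCompactSupport (fun p : ℝ × ℝ =>
      fderiv ℝ (fun q : ℝ × ℝ => φ q.1 q.2) p ((0 : ℝ), (1 : ℝ))) :=
    hφc.fderiv_apply ℝ ((0 : ℝ), (1 : ℝ))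
  have heq : (fun t : ℝ => px φ t (ε * t))
      = fun t => (fun p : ℝ × ℝ =>
          fderiv ℝ (fun q : ℝ × ℝ => φ q.1 q.2) p ((0 : ℝ), (1 : ℝ))) (t, ε * t) := by
    funext t; exact px_eq φ hφ t (ε * t)
  rw [heq]
  exact ((hcont.comp (continuous_id.prodMk (continuous_const.mul continuous_id))
    ).integrable_of_hasCompactSupport (hcs_line hcs ε)).integrableOn

/-- The integral over `(0,∞)` of the transport derivative along a line. -/
lemma J_eq (a ε : ℝ) (φ : ℝ → ℝ → ℝ)
    (hφ : ContDiff ℝ (⊤ : ℕ∞) (fun p : ℝ × ℝ => φ p.1 p.2))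
    (hφc : HasCompactSupport (fun p : ℝ × ℝ => φ p.1 p.2)) :
    (∫ t in Ioi (0:ℝ), (pt φ t (ε * t) + a * px φ t (ε * t)))
      = -φ 0 0 + (a - ε) * ∫ t in Ioi (0:ℝ), px φ t (ε * t) := by
  have hg : ContDiff ℝ 1 (fun s : ℝ => φ s (ε * s)) := by
    have : ContDiff ℝ (⊤ : ℕ∞) (fun s : ℝ => φ s (ε * s)) :=
      hφ.comp (contDiff_id.prodMk (contDiff_const.mul contDiff_id))
    exact this.of_le (by simp)
  have hgc : HasCompactSupport (fun s : ℝ => φ s (ε * s)) := hcs_line hφc ε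
  have hderiv : ∀ t : ℝ, deriv (fun s : ℝ => φ s (ε * s)) t
      = pt φ t (ε * t) + ε * px φ t (ε * t) := fun t => (hasDerivAt_line φ hφ ε t).deriv
  have hI0 : (∫ t in Ioi (0:ℝ), (pt φ t (ε * t) + ε * px φ t (ε * t))) = -φ 0 0 := by
    have := hgc.integral_Ioi_deriv_eq hg 0
    simp only [hderiv] at this
    simpa using this
  have hint0 : IntegrableOn (fun t => pt φ t (ε * t) + ε * px φ t (ε * t)) (Ioi (0:ℝ)) := by
    have hc : Continuous (fun t => pt φ t (ε * t) + ε * px φ t (ε * t)) := by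
      have := hg.continuous_deriv le_rfl
      simpa only [funext hderiv] using this
    exact (hc.integrable_of_hasCompactSupport
      (by simpa only [funext hderiv] using hgc.deriv)).integrableOn
  have hintp := integrable_px_line φ hφ hφc ε
  have hsplit : ∀ t : ℝ, pt φ t (ε * t) + a * px φ t (ε * t)
      = (pt φ t (ε * t) + ε * px φ t (ε * t)) + (a - ε) * px φ t (ε * t) := by
    intro t; ring
  calc (∫ t in Ioi (0:ℝ), (pt φ t (ε * t) + a * px φ t (ε * t)))
      = ∫ t in Ioi (0:ℝ),
          ((pt φ t (ε * t) + ε * px φ t (ε * t)) + (a - ε) * px φ t (ε * t)) := by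
        simp_rw [hsplit]
    _ = (∫ t in Ioi (0:ℝ), (pt φ t (ε * t) + ε * px φ t (ε * t)))
          + ∫ t in Ioi (0:ℝ), (a - ε) * px φ t (ε * t) :=
        integral_add hint0 (hintp.const_mul _)
    _ = -φ 0 0 + (a - ε) * ∫ t in Ioi (0:ℝ), px φ t (ε * t) := by
        rw [hI0, MeasureTheory.integral_const_mul]

/-- **Division lemma in test-function form.**
For `a ∈ (-1,1)` and a smooth compactly supported `φ : ℝ² → ℝ`,
`-Λ(∂ₜφ + a ∂ₓφ) = -(1/(a²-1)) φ(0,0) + (1/2) ∫₀^∞ ∫_{-t}^{t} ∂ₓₓφ(t,x) dx dt`,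
which is the distributional identity
`∂ₓ²Y = (∂ₜ + a∂ₓ)(m ∂ₓY) + (a²-1)⁻¹ δ₍₀,₀₎` tested against `φ`. -/
theorem division_lemma_test_function (a : ℝ) (ha : a ∈ Ioo (-1 : ℝ) 1)
    (φ : ℝ → ℝ → ℝ)
    (hφ : ContDiff ℝ (⊤ : ℕ∞) (fun p : ℝ × ℝ => φ p.1 p.2))
    (hφc : HasCompactSupport (fun p : ℝ × ℝ => φ p.1 p.2)) :
    -Lam a (fun t x => pt φ t x + a * px φ t x)
      = -(1 / (a ^ 2 - 1)) * φ 0 0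
        + (1 / 2) * ∫ t in Ioi (0:ℝ), ∫ x in (-t)..t, deriv (deriv (φ t)) x := by
  obtain ⟨ha1, ha2⟩ := ha
  have hne1 : a + 1 ≠ 0 := by linarith
  have hne2 : a - 1 ≠ 0 := by linarith
  -- inner FTC
  have inner : ∀ t : ℝ, (∫ x in (-t)..t, deriv (deriv (φ t)) x)
      = px φ t (1 * t) - px φ t ((-1) * t) := by
    intro t
    have hφt : ContDiff ℝ (⊤ : ℕ∞) (fun y => φ t y) :=
      hφ.comp (contDiff_const.prodMk contDiff_id)
    have h1 := (contDiff_infty_iff_deriv.mp (hφt.of_le (by simp))).2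
    have hd1 : Differentiable ℝ (deriv (φ t)) := h1.differentiable (by simp)
    have hc2 : Continuous (deriv (deriv (φ t))) :=
      ((contDiff_infty_iff_deriv.mp h1).2).continuous
    rw [intervalIntegral.integral_deriv_eq_sub (fun x _ => hd1 x)
      (hc2.intervalIntegrable _ _)]
    simp only [one_mul, neg_one_mul]
    rfl
  have hJm := J_eq a (-1) φ hφ hφc
  have hJp := J_eq a 1 φ hφ hφc
  have hintm := integrable_px_line φ hφ hφc (-1)
  have hintp := integrable_px_line φ hφ hφc 1
  -- rewrite the double integral
  have hRHS : (∫ t in Ioi (0:ℝ), ∫ x in (-t)..t, deriv (deriv (φ t)) x)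
      = (∫ t in Ioi (0:ℝ), px φ t (1 * t)) - ∫ t in Ioi (0:ℝ), px φ t ((-1) * t) := by
    rw [show (fun t : ℝ => ∫ x in (-t)..t, deriv (deriv (φ t)) x)
        = fun t => px φ t (1 * t) - px φ t ((-1) * t) from funext inner]
    exact integral_sub hintp hintm
  have hLm : (∫ t in Ioi (0:ℝ), (pt φ t (-t) + a * px φ t (-t)))
      = -φ 0 0 + (a + 1) * ∫ t in Ioi (0:ℝ), px φ t ((-1) * t) := by
    have := hJm
    simp only [neg_one_mul] at this ⊢
    convert this using 2
    ring
  have hLp : (∫ t in Ioi (0:ℝ), (pt φ t t + a * px φ t t))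
      = -φ 0 0 + (a - 1) * ∫ t in Ioi (0:ℝ), px φ t (1 * t) := by
    have := hJp
    simp only [one_mul] at this ⊢
    exact this
  rw [Lam, hRHS]
  simp only [hLm, hLp]
  have hsq : a ^ 2 - 1 = (a + 1) * (a - 1) := by ring
  field_simp [hsq]
  ring
end

section
/- Representation formula for the time derivative of a solution of the 1D wave equation: let T > 0, let j : [0,T]×ℝ → ℝ be continuous, and let A : [0,T]×ℝ → ℝ be twice continuously differentiable with ∂ₜₜA(t,x) − ∂ₓₓA(t,x) = j(t,x) for all (t,x). Then for all (t,x) ∈ [0,T]×ℝ: ∂ₜA(t,x) = (1/2)(∂ₓA(0,x+t) − ∂ₓA(0,x−t) + ∂ₜA(0,x+t) + ∂ₜA(0,x−t)) + (1/2) ∫₀ᵗ ( j(τ, x−(t−τ)) + j(τ, x+(t−τ)) ) dτ. -/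
open MeasureTheory Set intervalIntegral

/-- **Representation formula for the time derivative of a solution of the 1D wave equation.**
If `j` is continuous on `[0,T]×ℝ` and `A` is twice continuously differentiable with
`∂ₜₜA - ∂ₓₓA = j` on `[0,T]×ℝ`, then for all `(t,x) ∈ [0,T]×ℝ`:
`∂ₜA(t,x) = (1/2)(∂ₓA(0,x+t) - ∂ₓA(0,x-t) + ∂ₜA(0,x+t) + ∂ₜA(0,x-t))
           + (1/2) ∫₀ᵗ (j(τ, x-(t-τ)) + j(τ, x+(t-τ))) dτ`. -/
theorem wave_time_derivative_representation (T : ℝ) (hT : 0 < T)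
    (j A : ℝ → ℝ → ℝ)
    (hj : ContinuousOn (fun p : ℝ × ℝ => j p.1 p.2) (Icc (0:ℝ) T ×ˢ univ))
    (hA : ContDiff ℝ 2 (fun p : ℝ × ℝ => A p.1 p.2))
    (hwave : ∀ t ∈ Icc (0:ℝ) T, ∀ x : ℝ, pt (pt A) t x - px (px A) t x = j t x) :
    ∀ t ∈ Icc (0:ℝ) T, ∀ x : ℝ,
      pt A t x
        = (1/2) * (px A 0 (x + t) - px A 0 (x - t) + pt A 0 (x + t) + pt A 0 (x - t))
          + (1/2) * ∫ τ in (0:ℝ)..t, (j τ (x - (t - τ)) + j τ (x + (t - τ))) := by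
  intro t ht x
  set F : ℝ × ℝ → ℝ := fun p => A p.1 p.2 with hF
  have hdF : Differentiable ℝ F := hA.differentiable (by norm_num)
  have hdF1 : ContDiff ℝ 1 (fderiv ℝ F) := hA.fderiv_right (by norm_num)
  have hdF' : Differentiable ℝ (fderiv ℝ F) := hdF1.differentiable (by norm_num)
  set D2 : ℝ × ℝ → (ℝ × ℝ) →L[ℝ] (ℝ × ℝ) →L[ℝ] ℝ := fderiv ℝ (fderiv ℝ F) with hD2
  -- first partials
  have hptA : ∀ s y : ℝ, HasDerivAt (fun r => A r y) (fderiv ℝ F (s, y) (1, 0)) s := by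
    intro s y
    have h1 : HasDerivAt (fun r : ℝ => (r, y)) ((1:ℝ), (0:ℝ)) s :=
      HasDerivAt.prodMk (hasDerivAt_id s) (hasDerivAt_const s y)
    exact (hdF (s, y)).hasFDerivAt.comp_hasDerivAt s h1
  have hpxA : ∀ s y : ℝ, HasDerivAt (fun r => A s r) (fderiv ℝ F (s, y) (0, 1)) y := by
    intro s y
    have h1 : HasDerivAt (fun r : ℝ => (s, r)) ((0:ℝ), (1:ℝ)) y :=
      HasDerivAt.prodMk (hasDerivAt_const y s) (hasDerivAt_id y)
    exact (hdF (s, y)).hasFDerivAt.comp_hasDerivAt y h1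
  have hpt : ∀ s y : ℝ, pt A s y = fderiv ℝ F (s, y) (1, 0) := fun s y => (hptA s y).deriv
  have hpx : ∀ s y : ℝ, px A s y = fderiv ℝ F (s, y) (0, 1) := fun s y => (hpxA s y).deriv
  -- derivative of p ↦ fderiv F p u
  have hclm : ∀ (u p : ℝ × ℝ), HasFDerivAt (fun q => fderiv ℝ F q u) ((D2 p).flip u) p := by
    intro u p
    have h := ((hdF' p).hasFDerivAt).clm_apply (hasFDerivAt_const u p)
    simpa using h
  -- symmetry of second derivative
  have hsymm : ∀ (p u v : ℝ × ℝ), D2 p u v = D2 p v u := fun p u v =>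
    second_derivative_symmetric (fun y => (hdF y).hasFDerivAt) (hdF' p).hasFDerivAt u v
  -- second partials
  have hptt : ∀ s y : ℝ, pt (pt A) s y = D2 (s, y) (1, 0) (1, 0) := by
    intro s y
    have h1 : HasDerivAt (fun r : ℝ => (r, y)) ((1:ℝ), (0:ℝ)) s :=
      HasDerivAt.prodMk (hasDerivAt_id s) (hasDerivAt_const s y)
    have h2 := (hclm (1, 0) (s, y)).comp_hasDerivAt s h1
    have h3 : HasDerivAt (fun r : ℝ => pt A r y) (((D2 (s, y)).flip (1, 0)) (1, 0)) s :=
      h2.congr_of_eventuallyEq (Filter.Eventually.of_forall fun r => hpt r y)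
    have := h3.deriv
    simpa [pt, ContinuousLinearMap.flip_apply] using this
  have hpxx : ∀ s y : ℝ, px (px A) s y = D2 (s, y) (0, 1) (0, 1) := by
    intro s y
    have h1 : HasDerivAt (fun r : ℝ => (s, r)) ((0:ℝ), (1:ℝ)) y :=
      HasDerivAt.prodMk (hasDerivAt_const y s) (hasDerivAt_id y)
    have h2 := (hclm (0, 1) (s, y)).comp_hasDerivAt y h1
    have h3 : HasDerivAt (fun r : ℝ => px A s r) (((D2 (s, y)).flip (0, 1)) (0, 1)) y :=
      h2.congr_of_eventuallyEq (Filter.Eventually.of_forall fun r => hpx s r)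
    have := h3.deriv
    simpa [px, ContinuousLinearMap.flip_apply] using this
  -- wave equation in terms of D2
  have hwave' : ∀ s ∈ Icc (0:ℝ) T, ∀ y : ℝ,
      D2 (s, y) (1, 0) (1, 0) - D2 (s, y) (0, 1) (0, 1) = j s y := by
    intro s hs y
    rw [← hptt, ← hpxx]
    exact hwave s hs y
  have h0t : (0:ℝ) ≤ t := ht.1
  have hsubT : Icc (0:ℝ) t ⊆ Icc (0:ℝ) T := Icc_subset_Icc le_rfl ht.2
  -- expansion of directional second derivatives
  have hexp1 : ∀ p : ℝ × ℝ, ∀ u : ℝ × ℝ, D2 p ((1:ℝ), (-1:ℝ)) u = D2 p (1, 0) u - D2 p (0, 1) u := by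
    intro p u
    have : ((1:ℝ), (-1:ℝ)) = ((1:ℝ), (0:ℝ)) - ((0:ℝ), (1:ℝ)) := by norm_num [Prod.ext_iff]
    rw [this, map_sub, ContinuousLinearMap.sub_apply]
  have hexp2 : ∀ p : ℝ × ℝ, ∀ u : ℝ × ℝ, D2 p ((1:ℝ), (1:ℝ)) u = D2 p (1, 0) u + D2 p (0, 1) u := by
    intro p u
    have : ((1:ℝ), (1:ℝ)) = ((1:ℝ), (0:ℝ)) + ((0:ℝ), (1:ℝ)) := by norm_num [Prod.ext_iff]
    rw [this, map_add, ContinuousLinearMap.add_apply]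
  -- integrability
  have hcont1 : ContinuousOn (fun s : ℝ => j s (x + t - s)) (Icc 0 t) := by
    apply hj.comp (f := fun s : ℝ => (s, x + t - s))
    · exact (continuous_id.prodMk (continuous_const.sub continuous_id)).continuousOn
    · exact fun s hs => ⟨hsubT hs, trivial⟩
  have hcont2 : ContinuousOn (fun s : ℝ => j s (x - t + s)) (Icc 0 t) := by
    apply hj.comp (f := fun s : ℝ => (s, x - t + s))
    · exact (continuous_id.prodMk (continuous_const.add continuous_id)).continuousOn
    · exact fun s hs => ⟨hsubT hs, trivial⟩
  have hInt1 : IntervalIntegrable (fun s : ℝ => j s (x + t - s)) volume 0 t := by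
    apply ContinuousOn.intervalIntegrable; rwa [uIcc_of_le h0t]
  have hInt2 : IntervalIntegrable (fun s : ℝ => j s (x - t + s)) volume 0 t := by
    apply ContinuousOn.intervalIntegrable; rwa [uIcc_of_le h0t]
  -- FTC along the right-going characteristic
  have hFTC1 : ∫ s in (0:ℝ)..t, j s (x + t - s)
      = (fderiv ℝ F (t, x) (1, 0) + fderiv ℝ F (t, x) (0, 1))
        - (fderiv ℝ F (0, x + t) (1, 0) + fderiv ℝ F (0, x + t) (0, 1)) := by
    have hderiv : ∀ s ∈ uIcc (0:ℝ) t, HasDerivAt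
        (fun r : ℝ => fderiv ℝ F (r, x + t - r) (1, 0) + fderiv ℝ F (r, x + t - r) (0, 1))
        (j s (x + t - s)) s := by
      intro s hs
      rw [uIcc_of_le h0t] at hs
      have hγ : HasDerivAt (fun r : ℝ => (r, x + t - r)) ((1:ℝ), (-1:ℝ)) s := by
        exact HasDerivAt.prodMk (hasDerivAt_id s) (HasDerivAt.const_sub (x + t) (hasDerivAt_id s))
      set p : ℝ × ℝ := (s, x + t - s) with hp
      have h1 := (hclm (1, 0) p).comp_hasDerivAt s hγ
      have h2 := (hclm (0, 1) p).comp_hasDerivAt s hγ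
      have h3 := h1.add h2
      have hval : ((D2 p).flip (1, 0)) (1, -1) + ((D2 p).flip (0, 1)) (1, -1) = j s (x + t - s) := by
        simp only [ContinuousLinearMap.flip_apply]
        rw [hexp1, hexp1]
        have hw := hwave' s (hsubT hs) (x + t - s)
        have hsy := hsymm p (1, 0) (0, 1)
        linarith
      rw [hval] at h3
      exact h3
    have := intervalIntegral.integral_eq_sub_of_hasDerivAt hderiv hInt1
    rw [this]
    norm_num
  -- FTC along the left-going characteristic
  have hFTC2 : ∫ s in (0:ℝ)..t, j s (x - t + s)
      = (fderiv ℝ F (t, x) (1, 0) - fderiv ℝ F (t, x) (0, 1))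
        - (fderiv ℝ F (0, x - t) (1, 0) - fderiv ℝ F (0, x - t) (0, 1)) := by
    have hderiv : ∀ s ∈ uIcc (0:ℝ) t, HasDerivAt
        (fun r : ℝ => fderiv ℝ F (r, x - t + r) (1, 0) - fderiv ℝ F (r, x - t + r) (0, 1))
        (j s (x - t + s)) s := by
      intro s hs
      rw [uIcc_of_le h0t] at hs
      have hγ : HasDerivAt (fun r : ℝ => (r, x - t + r)) ((1:ℝ), (1:ℝ)) s := by
        exact HasDerivAt.prodMk (hasDerivAt_id s) (HasDerivAt.const_add (x - t) (hasDerivAt_id s))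
      set p : ℝ × ℝ := (s, x - t + s) with hp
      have h1 := (hclm (1, 0) p).comp_hasDerivAt s hγ
      have h2 := (hclm (0, 1) p).comp_hasDerivAt s hγ
      have h3 := h1.sub h2
      have hval : ((D2 p).flip (1, 0)) (1, 1) - ((D2 p).flip (0, 1)) (1, 1) = j s (x - t + s) := by
        simp only [ContinuousLinearMap.flip_apply]
        rw [hexp2, hexp2]
        have hw := hwave' s (hsubT hs) (x - t + s)
        have hsy := hsymm p (1, 0) (0, 1)
        linarith
      rw [hval] at h3
      exact h3
    have := intervalIntegral.integral_eq_sub_of_hasDerivAt hderiv hInt2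
    rw [this]
    norm_num
  -- assemble
  have hIsum : (∫ τ in (0:ℝ)..t, (j τ (x - (t - τ)) + j τ (x + (t - τ))))
      = (∫ τ in (0:ℝ)..t, j τ (x - t + τ)) + ∫ τ in (0:ℝ)..t, j τ (x + t - τ) := by
    rw [← intervalIntegral.integral_add hInt2 hInt1]
    apply intervalIntegral.integral_congr
    intro τ _
    have e1 : x - (t - τ) = x - t + τ := by ring
    have e2 : x + (t - τ) = x + t - τ := by ring
    simp only [e1, e2]
  rw [hpt t x, hpx 0 (x + t), hpx 0 (x - t), hpt 0 (x + t), hpt 0 (x - t), hIsum]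
  linarith [hFTC1, hFTC2]
end

section
/- Lipschitz bound on the characteristic flow: let T > 0 and let E : [0,T]×ℝ → ℝ be continuous and Lipschitz in x with constant L uniformly in t. Suppose T ≤ 1/3 and T·L ≤ 1/3. Then for all s, t ∈ [0,T], the map (x,v) ↦ X(s;t,x,v) is Lipschitz with some constant L_X, the map (x,v) ↦ V(s;t,x,v) is Lipschitz with some constant L_V, and these constants can be chosen uniformly in s, t so that L_X + L_V ≤ 3. -/
open MeasureTheory Set

/-- `X V : ℝ → ℝ → ℝ → ℝ → ℝ` (arguments `s t x v`) form the characteristic flow of the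
field `E` on `[0,T]`: for fixed `(t,x,v)`, `s ↦ (X(s;t,x,v), V(s;t,x,v))` solves
`dX/ds = V/√(1+V²)`, `dV/ds = E(s,X)` with `X(t;t,x,v) = x`, `V(t;t,x,v) = v`. -/
def IsCharFlow (T : ℝ) (E : ℝ → ℝ → ℝ) (X V : ℝ → ℝ → ℝ → ℝ → ℝ) : Prop :=
  ∀ t ∈ Icc (0:ℝ) T, ∀ x v : ℝ,
    X t t x v = x ∧ V t t x v = v ∧
    ∀ s ∈ Icc (0:ℝ) T,
      HasDerivAt (fun r => X r t x v) (V s t x v / Real.sqrt (1 + (V s t x v) ^ 2)) s ∧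
      HasDerivAt (fun r => V r t x v) (E s (X s t x v)) s


lemma lip_g (w w' : ℝ) :
    |w / Real.sqrt (1 + w ^ 2) - w' / Real.sqrt (1 + w' ^ 2)| ≤ |w - w'| := by
  have hd : ∀ u : ℝ, HasDerivAt (fun u : ℝ => u / Real.sqrt (1 + u ^ 2))
      (1 / (Real.sqrt (1 + u ^ 2)) ^ 3) u := by
    intro u
    have hpos : (0:ℝ) < 1 + u ^ 2 := by positivity
    have hspos : 0 < Real.sqrt (1 + u ^ 2) := Real.sqrt_pos.2 hpos
    have hsq : Real.sqrt (1 + u ^ 2) ^ 2 = 1 + u ^ 2 := Real.sq_sqrt hpos.le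
    have h1 : HasDerivAt (fun u : ℝ => 1 + u ^ 2) (2 * u) u := by
      simpa using ((hasDerivAt_pow 2 u).const_add 1)
    have hs : HasDerivAt (fun u : ℝ => Real.sqrt (1 + u ^ 2))
        (u / Real.sqrt (1 + u ^ 2)) u := by
      have := (Real.hasDerivAt_sqrt hpos.ne').comp u h1
      refine this.congr_deriv ?_
      field_simp
    have hq := (hasDerivAt_id u).div hs hspos.ne'
    refine hq.congr_deriv ?_
    simp only [id]
    field_simp
    nlinarith [hsq, hspos]
  have bound : ∀ u : ℝ, ‖(1 : ℝ) / (Real.sqrt (1 + u ^ 2)) ^ 3‖ ≤ 1 := by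
    intro u
    have hpos : (0:ℝ) < 1 + u ^ 2 := by positivity
    have h1 : (1:ℝ) ≤ Real.sqrt (1 + u ^ 2) := by
      have := Real.sqrt_le_sqrt (show (1:ℝ) ≤ 1 + u ^ 2 by nlinarith)
      simpa using this
    have h3 : (1:ℝ) ≤ Real.sqrt (1 + u ^ 2) ^ 3 := by
      simpa using pow_le_pow_left₀ zero_le_one h1 3
    rw [Real.norm_eq_abs, abs_of_nonneg (by positivity), div_le_one (by positivity)]
    exact h3
  have := convex_univ.norm_image_sub_le_of_norm_hasDerivWithin_le
    (fun u _ => (hd u).hasDerivWithinAt) (fun u _ => bound u)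
    (mem_univ w') (mem_univ w)
  simpa [Real.norm_eq_abs] using this

/-- **Lipschitz bound on the characteristic flow.**
If `E` is continuous on `[0,T]×ℝ` and Lipschitz in `x` with constant `L` uniformly in `t`,
and `T ≤ 1/3`, `T·L ≤ 1/3`, then the maps `(x,v) ↦ X(s;t,x,v)` and `(x,v) ↦ V(s;t,x,v)` are
Lipschitz with constants `L_X`, `L_V` (uniform in `s,t ∈ [0,T]`) satisfying `L_X + L_V ≤ 3`. -/
theorem char_flow_lipschitz (T L : ℝ) (hT : 0 < T)
    (E : ℝ → ℝ → ℝ)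
    (hEc : ContinuousOn (fun p : ℝ × ℝ => E p.1 p.2) (Icc (0:ℝ) T ×ˢ univ))
    (hEl : ∀ t ∈ Icc (0:ℝ) T, ∀ x y : ℝ, |E t x - E t y| ≤ L * |x - y|)
    (hT3 : T ≤ 1/3) (hTL : T * L ≤ 1/3)
    (X V : ℝ → ℝ → ℝ → ℝ → ℝ) (hflow : IsCharFlow T E X V) :
    ∃ LX LV : ℝ, LX + LV ≤ 3 ∧
      ∀ s ∈ Icc (0:ℝ) T, ∀ t ∈ Icc (0:ℝ) T, ∀ x v x' v' : ℝ,
        |X s t x v - X s t x' v'| ≤ LX * Real.sqrt ((x - x') ^ 2 + (v - v') ^ 2) ∧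
        |V s t x v - V s t x' v'| ≤ LV * Real.sqrt ((x - x') ^ 2 + (v - v') ^ 2) := by
  refine ⟨3/2, 3/2, by norm_num, ?_⟩
  intro s hs t ht x v x' v'
  obtain ⟨hX0, hV0, hder⟩ := hflow t ht x v
  obtain ⟨hX0', hV0', hder'⟩ := hflow t ht x' v'
  set δ := Real.sqrt ((x - x') ^ 2 + (v - v') ^ 2) with hδ
  have hδx : |x - x'| ≤ δ := by
    rw [← Real.sqrt_sq_eq_abs]
    exact Real.sqrt_le_sqrt (by nlinarith [sq_nonneg (v - v')])
  have hδv : |v - v'| ≤ δ := by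
    rw [← Real.sqrt_sq_eq_abs]
    exact Real.sqrt_le_sqrt (by nlinarith [sq_nonneg (x - x')])
  have hL0 : 0 ≤ L := by
    have h := hEl 0 ⟨le_refl 0, hT.le⟩ 0 1
    have h0 := abs_nonneg (E 0 0 - E 0 1)
    simp only [zero_sub, abs_neg, abs_one, mul_one] at h
    linarith
  set F : ℝ → ℝ := fun r => X r t x v - X r t x' v' with hF
  set G : ℝ → ℝ := fun r => V r t x v - V r t x' v' with hG
  have hFd : ∀ r ∈ Icc (0:ℝ) T, HasDerivAt F
      (V r t x v / Real.sqrt (1 + (V r t x v) ^ 2)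
        - V r t x' v' / Real.sqrt (1 + (V r t x' v') ^ 2)) r :=
    fun r hr => ((hder r hr).1.sub (hder' r hr).1)
  have hGd : ∀ r ∈ Icc (0:ℝ) T, HasDerivAt G
      (E r (X r t x v) - E r (X r t x' v')) r :=
    fun r hr => ((hder r hr).2.sub (hder' r hr).2)
  have hFc0 : ContinuousOn F (Icc (0:ℝ) T) :=
    fun r hr => (hFd r hr).continuousAt.continuousWithinAt
  have hGc0 : ContinuousOn G (Icc (0:ℝ) T) :=
    fun r hr => (hGd r hr).continuousAt.continuousWithinAt
  have hFc : ContinuousOn (fun r => |F r|) (Icc (0:ℝ) T) := hFc0.abs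
  have hGc : ContinuousOn (fun r => |G r|) (Icc (0:ℝ) T) := hGc0.abs
  obtain ⟨sA, hsA, hAmax⟩ := isCompact_Icc.exists_isMaxOn (nonempty_Icc.2 hT.le) hFc
  obtain ⟨sB, hsB, hBmax⟩ := isCompact_Icc.exists_isMaxOn (nonempty_Icc.2 hT.le) hGc
  set A := |F sA| with hA0
  set B := |G sB| with hB0
  have hA0' : 0 ≤ A := abs_nonneg _
  have hB0' : 0 ≤ B := abs_nonneg _
  have hAb : ∀ r ∈ Icc (0:ℝ) T, |F r| ≤ A := fun r hr => hAmax hr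
  have hBb : ∀ r ∈ Icc (0:ℝ) T, |G r| ≤ B := fun r hr => hBmax hr
  -- bound on A
  have hFest : ∀ r ∈ Icc (0:ℝ) T, |F r| ≤ |x - x'| + T * B := by
    intro r hr
    have key := (convex_Icc (0:ℝ) T).norm_image_sub_le_of_norm_hasDerivWithin_le
      (f := F) (fun u hu => (hFd u hu).hasDerivWithinAt)
      (fun u hu => by
        rw [Real.norm_eq_abs]
        exact le_trans (lip_g _ _) (hBb u hu)) ht hr
    have hFt : F t = x - x' := by simp [hF, hX0, hX0']
    have hrt : |r - t| ≤ T := by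
      rw [abs_sub_le_iff]
      constructor <;> [linarith [hr.1, hr.2, ht.1, ht.2]; linarith [hr.1, hr.2, ht.1, ht.2]]
    rw [Real.norm_eq_abs, Real.norm_eq_abs, hFt] at key
    calc |F r| ≤ |F r - (x - x')| + |x - x'| := by
          simpa [sub_add_cancel] using abs_add_le (F r - (x - x')) (x - x')
      _ ≤ B * |r - t| + |x - x'| := by linarith [key]
      _ ≤ T * B + |x - x'| := by nlinarith [abs_nonneg (r - t)]
      _ = |x - x'| + T * B := by ring
  have hGest : ∀ r ∈ Icc (0:ℝ) T, |G r| ≤ |v - v'| + T * (L * A) := by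
    intro r hr
    have key := (convex_Icc (0:ℝ) T).norm_image_sub_le_of_norm_hasDerivWithin_le
      (f := G) (fun u hu => (hGd u hu).hasDerivWithinAt)
      (fun u hu => by
        rw [Real.norm_eq_abs]
        calc |E u (X u t x v) - E u (X u t x' v')| ≤ L * |X u t x v - X u t x' v'| :=
              hEl u hu _ _
          _ ≤ L * A := mul_le_mul_of_nonneg_left (hAb u hu) hL0) ht hr
    have hGt : G t = v - v' := by simp [hG, hV0, hV0']
    have hrt : |r - t| ≤ T := by
      rw [abs_sub_le_iff]
      constructor <;> linarith [hr.1, hr.2, ht.1, ht.2]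
    rw [Real.norm_eq_abs, Real.norm_eq_abs, hGt] at key
    calc |G r| ≤ |G r - (v - v')| + |v - v'| := by
          simpa [sub_add_cancel] using abs_add_le (G r - (v - v')) (v - v')
      _ ≤ L * A * |r - t| + |v - v'| := by linarith [key]
      _ ≤ T * (L * A) + |v - v'| := by nlinarith [abs_nonneg (r - t), mul_nonneg hL0 hA0']
      _ = |v - v'| + T * (L * A) := by ring
  have hA1 : A ≤ |x - x'| + T * B := hFest sA hsA
  have hB1 : B ≤ |v - v'| + T * (L * A) := hGest sB hsB
  have hTB : T * B ≤ B / 3 := by nlinarith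
  have hTLA : T * (L * A) ≤ A / 3 := by nlinarith [mul_nonneg hL0 hA0']
  have hAδ : A ≤ 3 / 2 * δ := by linarith
  have hBδ : B ≤ 3 / 2 * δ := by linarith
  exact ⟨le_trans (hAb s hs) hAδ, le_trans (hBb s hs) hBδ⟩
end
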